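/- arXiv:1902.11164 — 5 statements merged into one kernel-verified Lean document; each statement's English description precedes it below -/
import Mathlib

section
/- If P(x) = ((⋯(x^2 - c_1)^2 ⋯)^2 - c_k ∈ ℤ[x] splits into a product of linear factors over ℤ, then c_j is even for every j with 2 ≤ j ≤ k. -/
open Polynomial

noncomputable def chain (c : ℕ → ℤ) : ℕ → Polynomial ℤ
  | 0 => X
  | j + 1 => (chain c j) ^ 2 - C (c (j + 1))

def Crumbles (P : Polynomial ℤ) : Prop :=
  ∃ s : Multiset (Polynomial ℤ), (∀ q ∈ s, q.degree = 1) ∧ P = s.prod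

lemma chain_succ (c : ℕ → ℤ) (j : ℕ) :
    chain c (j + 1) = (chain c j) ^ 2 - C (c (j + 1)) := rfl

lemma chain_natDegree (c : ℕ → ℤ) : ∀ j, (chain c j).natDegree = 2 ^ j
  | 0 => natDegree_X
  | j + 1 => by
    rw [chain_succ, natDegree_sub_C, natDegree_pow, chain_natDegree c j, pow_succ, mul_comm]

lemma chain_monic (c : ℕ → ℤ) : ∀ j, (chain c j).Monic
  | 0 => monic_X
  | j + 1 => by
    rw [chain_succ]
    refine ((chain_monic c j).pow 2).sub_of_left (lt_of_le_of_lt degree_C_le ?_)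
    rw [← natDegree_pos_iff_degree_pos, natDegree_pow, chain_natDegree]
    positivity

lemma chain_congr (c c' : ℕ → ℤ) : ∀ j, (∀ i, 1 ≤ i → i ≤ j → c i = c' i) →
    chain c j = chain c' j
  | 0, _ => rfl
  | j + 1, h => by
    rw [chain_succ, chain_succ,
      chain_congr c c' j (fun i h1 h2 => h i h1 (h2.trans (Nat.le_succ j))),
      h (j + 1) (by omega) le_rfl]

lemma eval_chain_succ (c : ℕ → ℤ) (x : ℤ) (j : ℕ) :
    (chain c (j + 1)).eval x = ((chain c j).eval x) ^ 2 - c (j + 1) := by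
  rw [chain_succ]; simp

lemma chain_zero (c : ℕ → ℤ) : chain c 0 = X := rfl

lemma sq_mod2 (a : ℤ) : a ^ 2 ≡ a [ZMOD 2] := by
  obtain ⟨t, ht⟩ := Int.even_mul_succ_self (a - 1)
  exact Int.modEq_iff_dvd.mpr ⟨-t, by linear_combination -ht⟩

lemma sq_mod4 {a b : ℤ} (h : a ≡ b [ZMOD 2]) : a ^ 2 ≡ b ^ 2 [ZMOD 4] := by
  obtain ⟨t, ht⟩ := Int.ModEq.dvd h
  exact Int.modEq_iff_dvd.mpr ⟨a * t + t ^ 2, by linear_combination (b + a + 2 * t) * ht⟩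

lemma chain_eval_mod2 (c : ℕ → ℤ) {r r' : ℤ} (h : r ≡ r' [ZMOD 2]) :
    ∀ j, (chain c j).eval r ≡ (chain c j).eval r' [ZMOD 2]
  | 0 => by simpa [chain_zero, eval_X] using h
  | j + 1 => by
    rw [eval_chain_succ, eval_chain_succ]
    exact ((chain_eval_mod2 c h j).pow 2).sub_right _

lemma chain_eval_mod4 (c : ℕ → ℤ) {r r' : ℤ} (h : r ≡ r' [ZMOD 2]) (j : ℕ) :
    (chain c (j + 1)).eval r ≡ (chain c (j + 1)).eval r' [ZMOD 4] := by
  rw [eval_chain_succ, eval_chain_succ]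
  exact (sq_mod4 (chain_eval_mod2 c h j)).sub_right _

lemma chain_eval_parity (c : ℕ → ℤ) (x : ℤ) :
    ∀ j, (chain c j).eval x ≡ x + ∑ i ∈ Finset.range j, c (i + 1) [ZMOD 2]
  | 0 => by simp [chain_zero, eval_X]
  | j + 1 => by
    rw [eval_chain_succ, Finset.sum_range_succ, ← add_assoc]
    have h1 : ((chain c j).eval x) ^ 2 ≡ x + ∑ i ∈ Finset.range j, c (i + 1) [ZMOD 2] :=
      (sq_mod2 _).trans (chain_eval_parity c x j)
    have h2 : -(c (j + 1)) ≡ c (j + 1) [ZMOD 2] :=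
      Int.modEq_iff_dvd.mpr ⟨c (j + 1), by ring⟩
    simpa [sub_eq_add_neg] using h1.add h2

lemma roots_parity (c : ℕ → ℤ) (k : ℕ) {r r' : ℤ} (h : (chain c k).eval r = 0)
    (h' : (chain c k).eval r' = 0) : r ≡ r' [ZMOD 2] := by
  have h1 := chain_eval_parity c r k
  have h2 := chain_eval_parity c r' k
  rw [h] at h1
  rw [h'] at h2
  have h3 := h1.symm.trans h2
  exact Int.ModEq.add_right_cancel' _ h3

lemma crumbles_monic_eq_prod {P : Polynomial ℤ} (hm : P.Monic) (h : Crumbles P) :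
    ∃ t : Multiset ℤ, P = (t.map (fun r => X - C r)).prod := by
  obtain ⟨s, hdeg, rfl⟩ := h
  have hlc : (s.map (fun q => q.leadingCoeff)).prod = 1 := by
    rw [← leadingCoeff_multiset_prod]; exact hm
  have hunit : ∀ q ∈ s, q.leadingCoeff * q.leadingCoeff = 1 := by
    intro q hq
    have hd : q.leadingCoeff ∣ 1 :=
      hlc ▸ Multiset.dvd_prod (Multiset.mem_map_of_mem _ hq)
    rcases Int.isUnit_iff.mp (isUnit_of_dvd_one hd) with h | h <;> rw [h] <;> ring
  have key : ∀ q ∈ s, q = C q.leadingCoeff * (X - C (-(q.coeff 1 * q.coeff 0))) := by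
    intro q hq
    have hd : q.degree = 1 := hdeg q hq
    have hnd : q.natDegree = 1 := natDegree_eq_of_degree_eq_some hd
    have hl : q.leadingCoeff = q.coeff 1 := by rw [leadingCoeff, hnd]
    have ha : q.coeff 1 * q.coeff 1 = 1 := by rw [← hl]; exact hunit q hq
    calc q = C (q.coeff 1) * X + C (q.coeff 0) := eq_X_add_C_of_degree_le_one hd.le
    _ = C (q.coeff 1) * X + C (q.coeff 1 * q.coeff 1 * q.coeff 0) := by rw [ha, one_mul]
    _ = C q.leadingCoeff * (X - C (-(q.coeff 1 * q.coeff 0))) := by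
        simp only [hl, C_neg, C_mul, sub_neg_eq_add]; ring
  refine ⟨s.map (fun q => -(q.coeff 1 * q.coeff 0)), ?_⟩
  conv_lhs => rw [← Multiset.map_id' s, Multiset.map_congr rfl key]
  rw [Multiset.prod_map_mul]
  have hone : (s.map (fun q => C q.leadingCoeff)).prod = 1 := by
    rw [show (fun (q : Polynomial ℤ) => C q.leadingCoeff) =
      ((C : ℤ →+* Polynomial ℤ) ∘ fun q => q.leadingCoeff) from rfl, ← Multiset.map_map,
      ← map_multiset_prod, hlc, map_one]
  rw [hone, one_mul, Multiset.map_map]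
  rfl

lemma splits_prod_linear (t : Multiset ℚ) :
    Splits ((t.map (fun r => X - C r)).prod) := by
  induction t using Multiset.induction_on with
  | empty => simpa using (Splits.one : Splits (1 : ℚ[X]))
  | cons a s ih =>
    rw [Multiset.map_cons, Multiset.prod_cons]
    exact (Splits.X_sub_C _).mul ih

lemma dvd_prod_linear {t : Multiset ℤ} {d : Polynomial ℤ} (hm : d.Monic)
    (hdvd : d ∣ (t.map (fun r => X - C r)).prod) :
    ∃ t' : Multiset ℤ, d = (t'.map (fun r => X - C r)).prod := by
  set φ : ℤ →+* ℚ := Int.castRingHom ℚ with hφ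
  set P : Polynomial ℤ := (t.map (fun r => X - C r)).prod with hP
  have hPm : P.Monic := monic_multiset_prod_of_monic _ _ (fun r _ => monic_X_sub_C r)
  have hmapP : P.map φ = ((t.map (fun r => φ r)).map (fun a => X - C a)).prod := by
    rw [hP, Polynomial.map_multiset_prod, Multiset.map_map, Multiset.map_map]
    refine congrArg Multiset.prod (Multiset.map_congr rfl ?_)
    intro r _
    simp
  have hdnz : P.map φ ≠ 0 := (hPm.map φ).ne_zero
  have hds : Splits (d.map φ) :=
    Splits.of_dvd (hmapP ▸ splits_prod_linear (t.map (fun r => φ r))) hdnz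
      (Polynomial.map_dvd φ hdvd)
  have heq : d.map φ = ((d.map φ).roots.map (fun a => X - C a)).prod :=
    hds.eq_prod_roots_of_monic (hm.map φ)
  have hroots : (d.map φ).roots ≤ t.map (fun r => φ r) := by
    rw [← roots_multiset_prod_X_sub_C (t.map (fun r => φ r)), ← hmapP]
    exact roots.le_of_dvd hdnz (Polynomial.map_dvd φ hdvd)
  have hint : ∀ x ∈ (d.map φ).roots, ((x.num : ℤ) : ℚ) = x := by
    intro x hx
    obtain ⟨r, _, rfl⟩ := Multiset.mem_map.mp (Multiset.mem_of_le hroots hx)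
    simp [hφ]
  refine ⟨(d.map φ).roots.map (fun x => x.num), ?_⟩
  apply Polynomial.map_injective φ Int.cast_injective
  conv_lhs => rw [heq]
  rw [Polynomial.map_multiset_prod, Multiset.map_map, Multiset.map_map]
  refine congrArg Multiset.prod (Multiset.map_congr rfl ?_)
  intro x hx
  simp only [Function.comp_apply, Polynomial.map_sub, map_X, map_C]
  rw [show φ x.num = ((x.num : ℤ) : ℚ) from rfl, hint x hx]

lemma exists_root_of_prod_linear {t : Multiset ℤ} {d : Polynomial ℤ}
    (h : d = (t.map (fun r => X - C r)).prod) (hdeg : d.natDegree ≠ 0) :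
    ∃ r ∈ t, d.eval r = 0 := by
  have ht : t ≠ 0 := by
    rintro rfl
    rw [h] at hdeg
    simp at hdeg
  obtain ⟨r, hr⟩ := Multiset.exists_mem_of_ne_zero ht
  refine ⟨r, hr, ?_⟩
  rw [h, eval_multiset_prod, Multiset.map_map]
  exact Multiset.prod_eq_zero (Multiset.mem_map.mpr ⟨r, hr, by simp⟩)

theorem stmt_2 (k : ℕ) (c : ℕ → ℤ) (hcr : Crumbles (chain c k)) :
    ∀ j, 2 ≤ j → j ≤ k → 2 ∣ c j := by
  induction k generalizing c with
  | zero => intro j h2 hk; omega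
  | succ n ih =>
    intro j h2 hjk
    have hn1 : 1 ≤ n := by omega
    obtain ⟨t, ht⟩ := crumbles_monic_eq_prod (chain_monic c (n + 1)) hcr
    have hdeg : (chain c (n + 1)).natDegree ≠ 0 := by
      rw [chain_natDegree]; positivity
    obtain ⟨r₀, -, hr₀⟩ := exists_root_of_prod_linear ht hdeg
    set m := (chain c n).eval r₀ with hmdef
    have hc : c (n + 1) = m ^ 2 := by
      have h := eval_chain_succ c r₀ n
      rw [hr₀] at h
      linarith
    have hfact : chain c (n + 1) = (chain c n - C m) * (chain c n + C m) := by
      rw [chain_succ, hc]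
      rw [show (C (m ^ 2) : Polynomial ℤ) = (C m) ^ 2 by rw [map_pow]]
      ring
    have hdegC : (C m : Polynomial ℤ).degree < (chain c n).degree :=
      lt_of_le_of_lt degree_C_le (by
        rw [← natDegree_pos_iff_degree_pos, chain_natDegree]; positivity)
    have hmonic_sub : (chain c n - C m).Monic := (chain_monic c n).sub_of_left hdegC
    have hmonic_add : (chain c n + C m).Monic := (chain_monic c n).add_of_left hdegC
    have hdvd_add : (chain c n + C m) ∣ (t.map (fun r => X - C r)).prod := by
      rw [← ht]; exact Dvd.intro_left _ hfact.symm
    have hdvd_sub : (chain c n - C m) ∣ (t.map (fun r => X - C r)).prod := by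
      rw [← ht]; exact ⟨_, hfact⟩
    obtain ⟨t₂, ht₂⟩ := dvd_prod_linear hmonic_add hdvd_add
    have hdeg2 : (chain c n + C m).natDegree ≠ 0 := by
      rw [natDegree_add_C, chain_natDegree]; positivity
    obtain ⟨r₁, -, hr₁⟩ := exists_root_of_prod_linear ht₂ hdeg2
    have hv₁ : (chain c n).eval r₁ = -m := by
      have h' : (chain c n).eval r₁ + m = 0 := by simpa using hr₁
      linarith
    have hr₁' : (chain c (n + 1)).eval r₁ = 0 := by
      rw [eval_chain_succ, hv₁, hc]; ring
    have hpar : r₀ ≡ r₁ [ZMOD 2] := roots_parity c (n + 1) hr₀ hr₁'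
    have h4 : m ≡ -m [ZMOD 4] := by
      have h' := chain_eval_mod4 c hpar (n - 1)
      rw [Nat.sub_add_cancel hn1] at h'
      rwa [← hmdef, hv₁] at h'
    have hm2 : (2 : ℤ) ∣ m := by
      obtain ⟨u, hu⟩ := Int.ModEq.dvd h4
      omega
    rcases eq_or_lt_of_le hjk with hj | hj
    · rw [hj, hc, pow_two]
      exact hm2.mul_right m
    · have hjn : j ≤ n := by omega
      have hn2 : 2 ≤ n := by omega
      set c' := Function.update c n (c n + m) with hc'def
      have hchain' : chain c' n = chain c n - C m := by
        obtain ⟨p, rfl⟩ : ∃ p, n = p + 1 := ⟨n - 1, by omega⟩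
        rw [chain_succ, chain_succ,
          chain_congr c' c p (fun i h1 h2 => Function.update_of_ne (by omega) _ c),
          hc'def, Function.update_self, C_add]
        ring
      have hcr' : Crumbles (chain c' n) := by
        obtain ⟨t₃, ht₃⟩ := dvd_prod_linear hmonic_sub hdvd_sub
        refine ⟨t₃.map (fun r => X - C r), fun q hq => ?_, by rw [hchain', ht₃]⟩
        obtain ⟨r, -, rfl⟩ := Multiset.mem_map.mp hq
        exact degree_X_sub_C r
      have hdvdj := ih c' hcr' j h2 hjn
      rcases eq_or_lt_of_le hjn with hjn' | hjn'
      · rw [hjn', hc'def, Function.update_self] at hdvdj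
        rw [hjn']
        omega
      · rwa [hc'def, Function.update_of_ne (by omega)] at hdvdj
end

section
/- Suppose P(x) = ((⋯(x^2 - c_1)^2 ⋯)^2 - c_k ∈ ℤ[x] splits into linear factors over ℤ. Then for each j with 1 ≤ j ≤ k, the primorial of 2^(j-1) (the product of all primes p ≤ 2^(j-1)) divides c_j. -/
open Polynomial

/-- The primor `m#`: the product of all primes `p ≤ m`. -/
def primor (m : ℕ) : ℕ := ∏ p ∈ Finset.filter Nat.Prime (Finset.range (m + 1)), p

namespace SqChainAux

lemma chain_succ (c : ℕ → ℤ) (l : ℕ) :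
    chain c (l + 1) = (chain c l) ^ 2 - C (c (l + 1)) := rfl

lemma chain_monic_natDegree (c : ℕ → ℤ) :
    ∀ l, (chain c l).Monic ∧ (chain c l).natDegree = 2 ^ l := by
  intro l
  induction l with
  | zero => exact ⟨by simpa [chain] using monic_X, by simp [chain]⟩
  | succ n ih =>
      obtain ⟨hm, hd⟩ := ih
      have hpowm : ((chain c n) ^ 2).Monic := hm.pow 2
      have hpowd : ((chain c n) ^ 2).natDegree = 2 ^ (n + 1) := by
        rw [hm.natDegree_pow, hd]; ring
      have hpos : 0 < ((chain c n) ^ 2).natDegree := by rw [hpowd]; positivity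
      have hlt : (C (c (n + 1))).degree < ((chain c n) ^ 2).degree :=
        lt_of_le_of_lt degree_C_le (natDegree_pos_iff_degree_pos.mp hpos)
      exact ⟨by rw [chain_succ]; exact hpowm.sub_of_left hlt,
             by rw [chain_succ, natDegree_sub_C, hpowd]⟩

lemma chain_monic (c : ℕ → ℤ) (l : ℕ) : (chain c l).Monic :=
  (chain_monic_natDegree c l).1

lemma chain_natDegree (c : ℕ → ℤ) (l : ℕ) : (chain c l).natDegree = 2 ^ l :=
  (chain_monic_natDegree c l).2

/-- Tower of squares predicate. -/
def T (c : ℕ → ℤ) : ℕ → ℤ → Prop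
  | 0, _ => True
  | l + 1, v => ∃ a b : ℤ, a ^ 2 = c (l + 1) + v ∧ b ^ 2 = c (l + 1) - v ∧
      T c l a ∧ T c l b

/-- Good values. -/
inductive Good (c : ℕ → ℤ) (k : ℕ) : ℕ → ℤ → Prop
  | top : Good c k k 0
  | step {l : ℕ} {w u : ℤ} : Good c k (l + 1) w → u ^ 2 = c (l + 1) + w → Good c k l u

lemma good_neg {c : ℕ → ℤ} {k l : ℕ} {v : ℤ} (h : Good c k l v) : Good c k l (-v) := by
  cases h with
  | top => simpa using Good.top
  | step h' hu => exact Good.step h' (by rw [neg_pow, ← hu]; ring)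

lemma good_dvd {c : ℕ → ℤ} {k l : ℕ} {v : ℤ} (h : Good c k l v) :
    (chain c l - C v) ∣ chain c k := by
  induction h with
  | top => simpa using dvd_refl (chain c k)
  | @step l w u h' hu ih =>
      refine dvd_trans ⟨chain c l + C u, ?_⟩ ih
      have hc : C (c (l + 1)) = (C u) ^ 2 - C w := by
        rw [show c (l + 1) = u ^ 2 - w by linarith, map_sub, map_pow]
      rw [chain_succ, hc]; ring

/-- Any monic divisor of positive degree of a crumbling polynomial has an
integer root. -/
lemma exists_root_of_dvd {P : Polynomial ℤ} (hmon : P.Monic) (hcr : Crumbles P)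
    {d : Polynomial ℤ} (hdeg : 0 < d.natDegree) (hdvd : d ∣ P) :
    ∃ r : ℤ, d.eval r = 0 := by
  obtain ⟨s, hs1, hs2⟩ := hcr
  set φ : ℤ →+* ℚ := Int.castRingHom ℚ with hφ
  have hφinj : Function.Injective φ := Int.cast_injective
  have hlead : (s.map (fun f => f.leadingCoeff)).prod = 1 := by
    have := (leadingCoeff_multiset_prod (t := s)).symm
    rw [← hs2, hmon.leadingCoeff] at this
    exact this
  have hunit : ∀ q ∈ s, IsUnit (q.leadingCoeff) := by
    intro q hq
    have : q.leadingCoeff ∣ (s.map (fun f => f.leadingCoeff)).prod :=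
      Multiset.dvd_prod (Multiset.mem_map_of_mem _ hq)
    rw [hlead] at this
    exact isUnit_of_dvd_one this
  have hsplits : ∀ q ∈ s, Splits (q.map φ) := by
    intro q hq
    apply Splits.of_degree_le_one
    rw [degree_map_eq_of_injective hφinj, hs1 q hq]
  have hmapprod : P.map φ = (s.map (fun q => q.map φ)).prod := by
    rw [hs2]
    exact (Polynomial.mapRingHom φ).map_multiset_prod s
  have hPsplit : Splits (P.map φ) := by
    rw [hmapprod]
    revert hsplits hs1
    refine Multiset.induction_on s (by intro _ _; simpa using Splits.one) ?_
    intro q t iht hs1 hsp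
    rw [Multiset.map_cons, Multiset.prod_cons]
    exact Splits.mul (hsp q (Multiset.mem_cons_self _ _))
      (iht (fun r hr => hs1 r (Multiset.mem_cons_of_mem hr))
        (fun r hr => hsp r (Multiset.mem_cons_of_mem hr)))
  have hP0 : P.map φ ≠ 0 := (hmon.map φ).ne_zero
  have hdsplit : Splits (d.map φ) :=
    Splits.of_dvd hPsplit hP0 (Polynomial.map_dvd φ hdvd)
  have hddeg : (d.map φ).degree ≠ 0 := by
    rw [degree_map_eq_of_injective hφinj]
    have := natDegree_pos_iff_degree_pos.mp hdeg
    exact ne_of_gt this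
  obtain ⟨x, hx⟩ := Splits.exists_eval_eq_zero hdsplit hddeg
  -- x is a root of P.map φ
  obtain ⟨g, hg⟩ := Polynomial.map_dvd φ hdvd
  have hProot : (P.map φ).eval x = 0 := by rw [hg, eval_mul, hx, zero_mul]
  rw [hmapprod, eval_multiset_prod, Multiset.prod_eq_zero_iff] at hProot
  rw [Multiset.map_map] at hProot
  obtain ⟨q, hqs, hq0⟩ := Multiset.mem_map.mp hProot
  have hq0 : (q.map φ).eval x = 0 := hq0
  -- q is linear with unit leading coefficient
  have hqdeg : q.degree = 1 := hs1 q hqs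
  have hqnd : q.natDegree = 1 := natDegree_eq_of_degree_eq_some hqdeg
  have hqeq : q = C (q.coeff 1) * X + C (q.coeff 0) :=
    eq_X_add_C_of_degree_le_one (le_of_eq hqdeg)
  have hlcq : q.leadingCoeff = q.coeff 1 := by rw [leadingCoeff, hqnd]
  have ha : q.coeff 1 = 1 ∨ q.coeff 1 = -1 :=
    Int.isUnit_iff.mp (hlcq ▸ hunit q hqs)
  set a := q.coeff 1
  set b := q.coeff 0
  have heval : (a : ℚ) * x + (b : ℚ) = 0 := by
    have : (q.map φ).eval x = (a : ℚ) * x + (b : ℚ) := by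
      rw [hqeq]; simp [hφ]
    rw [this] at hq0; exact hq0
  rcases ha with ha | ha
  · refine ⟨-b, ?_⟩
    have hxq : x = ((-b : ℤ) : ℚ) := by
      rw [ha] at heval; push_cast at heval ⊢; linarith
    have := eval_intCast_map φ d (-b)
    rw [← hxq] at this
    rw [hx] at this
    exact hφinj (by simpa [hφ] using this.symm)
  · refine ⟨b, ?_⟩
    have hxq : x = ((b : ℤ) : ℚ) := by
      rw [ha] at heval; push_cast at heval ⊢; linarith
    have := eval_intCast_map φ d b
    rw [← hxq] at this
    rw [hx] at this
    exact hφinj (by simpa [hφ] using this.symm)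

/-- From a good value at level `l+1`, obtain a square root step down to level `l`. -/
lemma good_step_down {c : ℕ → ℤ} {k : ℕ} (hcr : Crumbles (chain c k)) {l : ℕ} {w : ℤ}
    (h : Good c k (l + 1) w) :
    ∃ u : ℤ, u ^ 2 = c (l + 1) + w ∧ Good c k l u := by
  have hdvd : (chain c (l + 1) - C w) ∣ chain c k := good_dvd h
  have hdeg : 0 < (chain c (l + 1) - C w).natDegree := by
    rw [natDegree_sub_C, chain_natDegree]; positivity
  obtain ⟨r, hr⟩ := exists_root_of_dvd (chain_monic c k) hcr hdeg hdvd
  refine ⟨(chain c l).eval r, ?_, ?_⟩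
  · have : (chain c (l + 1)).eval r = w := by
      have := hr; rw [eval_sub, eval_C, sub_eq_zero] at this; exact this
    rw [chain_succ, eval_sub, eval_pow, eval_C] at this
    linarith
  · refine Good.step h ?_
    have : (chain c (l + 1)).eval r = w := by
      have := hr; rw [eval_sub, eval_C, sub_eq_zero] at this; exact this
    rw [chain_succ, eval_sub, eval_pow, eval_C] at this
    linarith

lemma good_T {c : ℕ → ℤ} {k : ℕ} (hcr : Crumbles (chain c k)) :
    ∀ l, ∀ v : ℤ, Good c k l v → T c l v := by
  intro l
  induction l with
  | zero => intro v _; trivial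
  | succ n ih =>
      intro v h
      obtain ⟨u, hu, hgu⟩ := good_step_down hcr h
      obtain ⟨b, hb, hgb⟩ := good_step_down hcr (good_neg h)
      exact ⟨u, b, hu, by linarith, ih u hgu, ih b hgb⟩

lemma exists_good {c : ℕ → ℤ} {k : ℕ} (hcr : Crumbles (chain c k)) :
    ∀ n, ∃ v : ℤ, Good c k (k - n) v := by
  intro n
  induction n with
  | zero => exact ⟨0, by simpa using Good.top⟩
  | succ n ih =>
      obtain ⟨v, hv⟩ := ih
      by_cases h : k - n = 0
      · exact ⟨v, by rwa [show k - (n+1) = k - n by omega]⟩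
      · have hkn : k - n = (k - (n + 1)) + 1 := by omega
        rw [hkn] at hv
        obtain ⟨u, _, hgu⟩ := good_step_down hcr hv
        exact ⟨u, hgu⟩

end SqChainAux
section NT
open Finset

variable {p : ℕ} [Fact p.Prime]

lemma neg_ne_self_zmod (hp2 : p ≠ 2) {y : ZMod p} (hy : y ≠ 0) : y ≠ -y := by
  intro h
  have h2 : (2 : ZMod p) * y = 0 := by linear_combination h
  rcases mul_eq_zero.mp h2 with h2 | h2
  · have : ((2 : ℕ) : ZMod p) = 0 := by exact_mod_cast h2
    have := (ZMod.natCast_eq_zero_iff 2 p).mp this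
    have := (Nat.prime_dvd_prime_iff_eq (Fact.out) Nat.prime_two).mp this
    exact hp2 this
  · exact hy h2

/-- Squaring at most halves (up to one) a symmetric subset of `ZMod p`, `p` odd. -/
lemma two_mul_card_sq_image_le (hp2 : p ≠ 2) (B : Finset (ZMod p))
    (hB : ∀ x ∈ B, -x ∈ B) :
    2 * (B.image (fun x => x ^ 2)).card ≤ B.card + 1 := by
  classical
  set B' := B.erase 0 with hB'
  have hfib : ∀ a ∈ B'.image (fun x => x ^ 2),
      2 ≤ (B'.filter (fun x => x ^ 2 = a)).card := by
    intro a ha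
    obtain ⟨y, hy, rfl⟩ := Finset.mem_image.mp ha
    have hy0 : y ≠ 0 := (Finset.mem_erase.mp hy).1
    have hyB : y ∈ B := (Finset.mem_erase.mp hy).2
    have hpair : ({y, -y} : Finset (ZMod p)) ⊆ B'.filter (fun x => x ^ 2 = y ^ 2) := by
      intro z hz
      rcases Finset.mem_insert.mp hz with rfl | hz
      · exact Finset.mem_filter.mpr ⟨hy, rfl⟩
      · rw [Finset.mem_singleton] at hz
        subst hz
        refine Finset.mem_filter.mpr ⟨?_, by ring⟩
        refine Finset.mem_erase.mpr ⟨?_, hB y hyB⟩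
        simpa using hy0
    calc 2 = ({y, -y} : Finset (ZMod p)).card :=
            (Finset.card_pair (neg_ne_self_zmod hp2 hy0)).symm
      _ ≤ _ := Finset.card_le_card hpair
  have h2 : 2 * (B'.image (fun x => x ^ 2)).card ≤ B'.card :=
    Finset.mul_card_image_le_card B' 2 hfib
  by_cases h0 : (0 : ZMod p) ∈ B
  · have hsub : B.image (fun x => x ^ 2) ⊆ insert 0 (B'.image (fun x => x ^ 2)) := by
      intro z hz
      obtain ⟨y, hy, rfl⟩ := Finset.mem_image.mp hz
      by_cases hy0 : y = 0
      · subst hy0; exact Finset.mem_insert.mpr (Or.inl (by norm_num))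
      · exact Finset.mem_insert_of_mem
          (Finset.mem_image_of_mem _ (Finset.mem_erase.mpr ⟨hy0, hy⟩))
    have hc : (B.image (fun x => x ^ 2)).card ≤ (B'.image (fun x => x ^ 2)).card + 1 := by
      calc (B.image (fun x => x ^ 2)).card ≤ (insert 0 (B'.image (fun x => x ^ 2))).card :=
            Finset.card_le_card hsub
        _ ≤ (B'.image (fun x => x ^ 2)).card + 1 := Finset.card_insert_le _ _
    have hcb : B'.card = B.card - 1 := Finset.card_erase_of_mem h0
    have hBpos : 1 ≤ B.card := Finset.card_pos.mpr ⟨0, h0⟩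
    omega
  · have hBeq : B' = B := Finset.erase_eq_of_notMem h0
    rw [hBeq] at h2
    omega

variable (c : ℕ → ℤ)

open SqChainAux in
/-- The set of residues of squares of integers admitting a depth-`t` tower. -/
noncomputable def Sq (t : ℕ) : Finset (ZMod p) :=
  letI := Classical.propDecidable
  Finset.univ.filter (fun x => ∃ a : ℤ, T c t a ∧ ((a : ZMod p)) ^ 2 = x)

open SqChainAux in
lemma sq_card (hp2 : p ≠ 2) : ∀ t, 2 ^ (t + 1) * (Sq (p := p) c t).card + 1 ≤ p + 2 ^ (t + 1) := by
  classical
  intro t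
  induction t with
  | zero =>
      have hsub : Sq (p := p) c 0 ⊆ (Finset.univ : Finset (ZMod p)).image (fun x => x ^ 2) := by
        intro z hz
        obtain ⟨a, -, ha⟩ := (Finset.mem_filter.mp hz).2
        exact ha ▸ Finset.mem_image_of_mem _ (Finset.mem_univ _)
      have h2 : 2 * ((Finset.univ : Finset (ZMod p)).image (fun x => x ^ 2)).card ≤
          (Finset.univ : Finset (ZMod p)).card + 1 :=
        two_mul_card_sq_image_le hp2 _ (fun x _ => Finset.mem_univ _)
      have hcard : (Finset.univ : Finset (ZMod p)).card = p := by
        rw [Finset.card_univ, ZMod.card]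
      have := Finset.card_le_card hsub
      have hp21 : (2:ℕ) ^ (0 + 1) = 2 := by norm_num
      rw [hp21]
      omega
  | succ t ih =>
      set B : Finset (ZMod p) := Finset.univ.filter
        (fun y => ((c (t + 1) : ZMod p) + y) ∈ Sq (p := p) c t ∧
                  ((c (t + 1) : ZMod p) - y) ∈ Sq (p := p) c t) with hBdef
      have hBsym : ∀ x ∈ B, -x ∈ B := by
        intro x hx
        obtain ⟨-, h1, h2⟩ := Finset.mem_filter.mp hx
        refine Finset.mem_filter.mpr ⟨Finset.mem_univ _, ?_, ?_⟩
        · rw [← sub_eq_add_neg]; exact h2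
        · rw [sub_neg_eq_add]; exact h1
      have hBcard : B.card ≤ (Sq (p := p) c t).card := by
        refine Finset.card_le_card_of_injOn (fun y => (c (t + 1) : ZMod p) + y) ?_ ?_
        · intro y hy; exact (Finset.mem_filter.mp hy).2.1
        · intro y _ z _ h; exact add_left_cancel h
      have hsub : Sq (p := p) c (t + 1) ⊆ B.image (fun x => x ^ 2) := by
        intro z hz
        obtain ⟨a, hTa, ha⟩ := (Finset.mem_filter.mp hz).2
        obtain ⟨e, f, he, hf, hTe, hTf⟩ := hTa
        refine ha ▸ Finset.mem_image_of_mem _ ?_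
        refine Finset.mem_filter.mpr ⟨Finset.mem_univ _, ?_, ?_⟩
        · refine Finset.mem_filter.mpr ⟨Finset.mem_univ _, e, hTe, ?_⟩
          have : ((e : ZMod p)) ^ 2 = ((e ^ 2 : ℤ) : ZMod p) := by push_cast; ring
          rw [this, he]; push_cast; ring
        · refine Finset.mem_filter.mpr ⟨Finset.mem_univ _, f, hTf, ?_⟩
          have : ((f : ZMod p)) ^ 2 = ((f ^ 2 : ℤ) : ZMod p) := by push_cast; ring
          rw [this, hf]; push_cast; ring
      have h2 : 2 * (Sq (p := p) c (t + 1)).card ≤ (Sq (p := p) c t).card + 1 := by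
        have := two_mul_card_sq_image_le hp2 B hBsym
        have hc := Finset.card_le_card hsub
        omega
      calc 2 ^ (t + 2) * (Sq (p := p) c (t + 1)).card + 1
          = 2 ^ (t + 1) * (2 * (Sq (p := p) c (t + 1)).card) + 1 := by ring
        _ ≤ 2 ^ (t + 1) * ((Sq (p := p) c t).card + 1) + 1 := by
            exact Nat.add_le_add_right (Nat.mul_le_mul_left _ h2) 1
        _ = (2 ^ (t + 1) * (Sq (p := p) c t).card + 1) + 2 ^ (t + 1) := by ring
        _ ≤ (p + 2 ^ (t + 1)) + 2 ^ (t + 1) := Nat.add_le_add_right ih _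
        _ = p + 2 ^ (t + 2) := by ring

end NT

open SqChainAux in
lemma tower_dvd (c : ℕ → ℤ) (p : ℕ) (hp : p.Prime) (m : ℕ) (hpm : p ≤ 2 ^ m)
    (u : ℤ) (h : T c m u) : (p : ℤ) ∣ u := by
  cases m with
  | zero =>
      have := hp.two_le
      simp only [pow_zero] at hpm
      omega
  | succ n =>
      obtain ⟨a, b, ha, hb, hTa, hTb⟩ := h
      by_cases hp2 : p = 2
      · subst hp2
        by_contra hu
        have hodd : Odd u := Int.not_even_iff_odd.mp (fun he => hu he.two_dvd)
        obtain ⟨t, rfl⟩ := hodd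
        have key : a ^ 2 - b ^ 2 = 2 * (2 * t + 1) := by linarith
        have h4 : ((a : ZMod 4)) ^ 2 - ((b : ZMod 4)) ^ 2 = 2 := by
          have hc : ((a ^ 2 - b ^ 2 : ℤ) : ZMod 4) = ((2 * (2 * t + 1) : ℤ) : ZMod 4) := by
            rw [key]
          push_cast at hc
          rw [hc]
          have h40 : (4 : ZMod 4) = 0 := by decide
          linear_combination (t : ZMod 4) * h40
        have hno : ∀ x y : ZMod 4, x ^ 2 - y ^ 2 ≠ 2 := by decide
        exact hno _ _ h4
      · haveI : Fact p.Prime := ⟨hp⟩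
        classical
        have h1 := sq_card (p := p) c hp2 n
        have hcard : (Sq (p := p) c n).card ≤ 1 := by
          have h2 : 2 ^ (n + 1) * (Sq (p := p) c n).card < 2 ^ (n + 1) * 2 := by
            calc 2 ^ (n + 1) * (Sq (p := p) c n).card
                < 2 ^ (n + 1) * (Sq (p := p) c n).card + 1 := Nat.lt_succ_self _
              _ ≤ p + 2 ^ (n + 1) := h1
              _ ≤ 2 ^ (n + 1) + 2 ^ (n + 1) := Nat.add_le_add_right hpm _
              _ = 2 ^ (n + 1) * 2 := by ring
          have := Nat.lt_of_mul_lt_mul_left h2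
          omega
        have hx1 : ((c (n + 1) + u : ℤ) : ZMod p) ∈ Sq (p := p) c n := by
          refine Finset.mem_filter.mpr ⟨Finset.mem_univ _, a, hTa, ?_⟩
          rw [show ((a : ZMod p)) ^ 2 = ((a ^ 2 : ℤ) : ZMod p) from by push_cast; ring, ha]
        have hx2 : ((c (n + 1) - u : ℤ) : ZMod p) ∈ Sq (p := p) c n := by
          refine Finset.mem_filter.mpr ⟨Finset.mem_univ _, b, hTb, ?_⟩
          rw [show ((b : ZMod p)) ^ 2 = ((b ^ 2 : ℤ) : ZMod p) from by push_cast; ring, hb]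
        have heq := Finset.card_le_one.mp hcard _ hx1 _ hx2
        push_cast at heq
        have h2u : (2 : ZMod p) * ((u : ℤ) : ZMod p) = 0 := by linear_combination heq
        have hu0 : ((u : ℤ) : ZMod p) = 0 := by
          rcases mul_eq_zero.mp h2u with h0 | h0
          · exfalso
            have : ((2 : ℕ) : ZMod p) = 0 := by exact_mod_cast h0
            have := (ZMod.natCast_eq_zero_iff 2 p).mp this
            exact hp2 ((Nat.prime_dvd_prime_iff_eq hp Nat.prime_two).mp this)
          · exact h0
        exact (ZMod.intCast_zmod_eq_zero_iff_dvd u p).mp hu0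

theorem stmt_4 (k : ℕ) (c : ℕ → ℤ) (hcr : Crumbles (chain c k)) :
    ∀ j, 1 ≤ j → j ≤ k → (primor (2 ^ (j - 1)) : ℤ) ∣ c j := by
  intro j hj1 hjk
  obtain ⟨v, hv⟩ := SqChainAux.exists_good hcr (k - j)
  rw [show k - (k - j) = j by omega] at hv
  have hv' : SqChainAux.Good c k ((j - 1) + 1) v := by
    rwa [show (j - 1) + 1 = j by omega]
  obtain ⟨u, hu, hgu⟩ := SqChainAux.good_step_down hcr hv'
  rw [show (j - 1) + 1 = j by omega] at hu
  have hTu : SqChainAux.T c (j - 1) u := SqChainAux.good_T hcr _ u hgu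
  have hTv : SqChainAux.T c j v := SqChainAux.good_T hcr _ v hv
  have hall : ∀ q ∈ Finset.filter Nat.Prime (Finset.range (2 ^ (j - 1) + 1)),
      q ∣ (c j).natAbs := by
    intro q hq
    obtain ⟨hqr, hqp⟩ := Finset.mem_filter.mp hq
    rw [Finset.mem_range] at hqr
    have hqle : q ≤ 2 ^ (j - 1) := by omega
    have h1 : (q : ℤ) ∣ u := tower_dvd c q hqp (j - 1) hqle u hTu
    have h2 : (q : ℤ) ∣ v := by
      refine tower_dvd c q hqp j ?_ v hTv
      calc q ≤ 2 ^ (j - 1) := hqle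
        _ ≤ 2 ^ j := Nat.pow_le_pow_right (by norm_num) (by omega)
    have h3 : (q : ℤ) ∣ c j := by
      rw [show c j = u ^ 2 - v by linarith]
      exact dvd_sub (dvd_pow h1 two_ne_zero) h2
    simpa using Int.natAbs_dvd_natAbs.mpr h3
  have hprimor : primor (2 ^ (j - 1)) ∣ (c j).natAbs :=
    Finset.prod_primes_dvd _ (fun q hq => (Finset.mem_filter.mp hq).2.prime) hall
  exact Int.dvd_natAbs.mp (Int.natCast_dvd_natCast.mpr hprimor)
end

section
/- Suppose P(x) = ((⋯(x^2 - c_1)^2 ⋯)^2 - c_k ∈ ℤ[x] splits into linear factors over ℤ. Then for every j with 1 ≤ j ≤ k, the integer 2·c_j can be written as a sum of two perfect squares. -/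
open Polynomial

lemma chain_monic_s9 (c : ℕ → ℤ) : ∀ k, (chain c k).Monic ∧ (chain c k).natDegree = 2 ^ k := by
  intro k
  induction k with
  | zero => exact ⟨monic_X, natDegree_X⟩
  | succ j ih =>
    obtain ⟨hm, hd⟩ := ih
    have hm2 : ((chain c j) ^ 2).Monic := hm.pow 2
    have hd2 : ((chain c j) ^ 2).natDegree = 2 ^ (j + 1) := by
      rw [hm.natDegree_pow, hd]; ring
    constructor
    · show ((chain c j) ^ 2 - C (c (j + 1))).Monic
      apply hm2.sub_of_left
      apply lt_of_le_of_lt (degree_C_le)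
      rw [degree_eq_natDegree hm2.ne_zero, hd2]
      exact_mod_cast (Nat.pow_pos (by norm_num : 0 < 2) : 0 < 2 ^ (j + 1))
    · show ((chain c j) ^ 2 - C (c (j + 1))).natDegree = 2 ^ (j + 1)
      rw [natDegree_sub_C, hd2]

lemma chain_comp (c : ℕ → ℤ) (j : ℕ) :
    ∀ m, (chain (fun i => c (j + i)) m).comp (chain c j) = chain c (j + m) := by
  intro m
  induction m with
  | zero => simp [chain]
  | succ i ih =>
    show ((chain (fun i => c (j + i)) i) ^ 2 - C (c (j + (i + 1)))).comp (chain c j) = _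
    rw [sub_comp, pow_comp, C_comp, ih]
    rfl

lemma chain_step_comp (c : ℕ → ℤ) (j : ℕ) :
    ∀ i, (chain (fun i => c (j + 1 + i)) i).comp (X ^ 2 - C (c (j + 1)))
      = chain (fun i => c (j + i)) (i + 1) := by
  intro i
  induction i with
  | zero =>
    show X.comp _ = X ^ 2 - C (c (j + 1))
    simp [chain]
  | succ i ih =>
    show ((chain (fun i => c (j + 1 + i)) i) ^ 2 - C (c (j + 1 + (i + 1)))).comp _ = _
    rw [sub_comp, pow_comp, C_comp, ih]
    show _ = (chain (fun i => c (j + i)) (i + 1)) ^ 2 - C (c (j + (i + 2)))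
    have h : j + 1 + (i + 1) = j + (i + 2) := by omega
    rw [h]

/-- The mapped chain over ℂ is an even function (for length ≥ 1). -/
lemma chain_even (d : ℕ → ℤ) (m : ℕ) (x : ℂ) :
    ((chain d (m + 1)).map (Int.castRingHom ℂ)).eval (-x)
      = ((chain d (m + 1)).map (Int.castRingHom ℂ)).eval x := by
  induction m with
  | zero =>
    have h : chain d 1 = X ^ 2 - C (d 1) := by
      show (X : Polynomial ℤ) ^ 2 - C (d 1) = _
      rfl
    rw [h]
    simp
  | succ i ih =>
    have h : chain d (i + 1 + 1) = (chain d (i + 1)) ^ 2 - C (d (i + 2)) := rfl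
    rw [h]
    simp only [Polynomial.map_sub, Polynomial.map_pow, map_C, eval_sub, eval_pow, eval_C, ih]

lemma chain_neg_root (d : ℕ → ℤ) (m : ℕ) (x : ℂ)
    (h : ((chain d m).map (Int.castRingHom ℂ)).eval x = 0) :
    ((chain d m).map (Int.castRingHom ℂ)).eval (-x) = 0 := by
  cases m with
  | zero =>
    have hx : x = 0 := by simpa [chain] using h
    rw [hx, neg_zero]
    exact hx ▸ h
  | succ i => rw [chain_even]; exact h

/-- Key lemma: every complex root of the outer (shifted) chain is the value of the
inner chain at an integer. -/
lemma chain_root_int (k : ℕ) (c : ℕ → ℤ) (hcr : Crumbles (chain c k)) (j m : ℕ)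
    (hjm : j + m = k) (β : ℂ)
    (hβ : ((chain (fun i => c (j + i)) m).map (Int.castRingHom ℂ)).eval β = 0) :
    ∃ n : ℤ, (((chain c j).eval n : ℤ) : ℂ) = β := by
  obtain ⟨s, hs1, hs2⟩ := hcr
  set φ := Int.castRingHom ℂ with hφ
  have hmon := (chain_monic_s9 c k).1
  have hmonj := (chain_monic_s9 c j).1
  -- the polynomial (chain c j) - β has a complex root z
  have hdeg : ((chain c j).map φ - C β).natDegree = 2 ^ j := by
    rw [natDegree_sub_C, hmonj.natDegree_map, (chain_monic_s9 c j).2]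
  have hdegpos : 0 < ((chain c j).map φ - C β).degree := by
    apply natDegree_pos_iff_degree_pos.mp
    rw [hdeg]; positivity
  obtain ⟨z, hz⟩ := Complex.exists_root hdegpos
  have hz' : ((chain c j).map φ).eval z = β := by
    have h := hz
    simp only [IsRoot, eval_sub, eval_C, sub_eq_zero] at h
    exact h
  -- z is a root of chain c k
  have hzk : ((chain c k).map φ).eval z = 0 := by
    rw [← hjm, ← chain_comp c j m, Polynomial.map_comp, eval_comp, hz', hβ]
  -- hence z is a root of some linear factor q ∈ s
  have hzk' : ((s.map (Polynomial.map φ)).map (eval z)).prod = 0 := by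
    rw [← eval_multiset_prod, ← Polynomial.map_multiset_prod, ← hs2, hzk]
  rw [Multiset.prod_eq_zero_iff, Multiset.mem_map] at hzk'
  obtain ⟨y', hy', hy0'⟩ := hzk'
  rw [Multiset.mem_map] at hy'
  obtain ⟨q, hq, rfl⟩ := hy'
  have hy0 : (q.map φ).eval z = 0 := hy0'
  -- q has unit leading coefficient
  have hprod1 : (s.map fun f => leadingCoeff f).prod = 1 := by
    rw [← leadingCoeff_multiset_prod, ← hs2]
    exact hmon
  have hunit : IsUnit q.leadingCoeff := by
    apply isUnit_of_dvd_one
    rw [← hprod1]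
    exact Multiset.dvd_prod (Multiset.mem_map_of_mem _ hq)
  -- structure of q
  have hq1 : q.degree = 1 := hs1 q hq
  have hqn : q.natDegree = 1 := natDegree_eq_of_degree_eq_some hq1
  have hql : q.leadingCoeff = q.coeff 1 := by rw [leadingCoeff, hqn]
  have heq : q = C (q.coeff 1) * X + C (q.coeff 0) :=
    eq_X_add_C_of_degree_le_one (le_of_eq hq1)
  have hz0 : ((q.coeff 1 : ℤ) : ℂ) * z + ((q.coeff 0 : ℤ) : ℂ) = 0 := by
    have h := hy0
    rw [heq] at h
    simpa [hφ] using h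
  -- z is an integer
  have hex : ∃ n : ℤ, ((n : ℤ) : ℂ) = z := by
    obtain h1 | h1 := Int.isUnit_iff.mp (hql ▸ hunit)
    · refine ⟨-(q.coeff 0), ?_⟩
      rw [h1] at hz0
      push_cast at hz0 ⊢
      linear_combination -hz0
    · refine ⟨q.coeff 0, ?_⟩
      rw [h1] at hz0
      push_cast at hz0 ⊢
      linear_combination hz0
  obtain ⟨n, hn⟩ := hex
  refine ⟨n, ?_⟩
  calc (((chain c j).eval n : ℤ) : ℂ)
      = ((chain c j).map φ).eval ((n : ℤ) : ℂ) := (eval_intCast_map φ _ n).symm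
    _ = β := by rw [hn, hz']

theorem stmt_9 (k : ℕ) (c : ℕ → ℤ) (hcr : Crumbles (chain c k)) :
    ∀ j, 1 ≤ j → j ≤ k → ∃ r s : ℤ, 2 * c j = r ^ 2 + s ^ 2 := by
  intro j hj1 hj2
  obtain ⟨j', rfl⟩ : ∃ j', j = j' + 1 := ⟨j - 1, by omega⟩
  set φ := Int.castRingHom ℂ with hφ
  set m := k - (j' + 1) with hm
  have hk : j' + 1 + m = k := by omega
  -- a root β of the outer chain (constants c (j'+1+1), ...), plus -β is also a root
  have hdegpos : 0 < ((chain (fun i => c (j' + 1 + i)) m).map φ).degree := by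
    apply natDegree_pos_iff_degree_pos.mp
    rw [(chain_monic_s9 _ m).1.natDegree_map, (chain_monic_s9 _ m).2]
    positivity
  obtain ⟨β, hβ⟩ := Complex.exists_root hdegpos
  have hβ : ((chain (fun i => c (j' + 1 + i)) m).map φ).eval β = 0 := hβ
  have hβ' := chain_neg_root _ m β hβ
  -- square roots of c(j'+1) ± β
  obtain ⟨u, hu⟩ := IsAlgClosed.exists_pow_nat_eq ((c (j' + 1) : ℂ) + β) (n := 2) (by norm_num)
  obtain ⟨v, hv⟩ := IsAlgClosed.exists_pow_nat_eq ((c (j' + 1) : ℂ) - β) (n := 2) (by norm_num)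
  -- u and v are roots of the chain starting one level deeper
  have hcomp : ∀ x : ℂ, x ^ 2 - (c (j' + 1) : ℂ) = β ∨ x ^ 2 - (c (j' + 1) : ℂ) = -β →
      ((chain (fun i => c (j' + i)) (m + 1)).map φ).eval x = 0 := by
    intro x hx
    rw [← chain_step_comp c j' m, Polynomial.map_comp, eval_comp]
    have hin : (((X : Polynomial ℤ) ^ 2 - C (c (j' + 1))).map φ).eval x
        = x ^ 2 - (c (j' + 1) : ℂ) := by
      simp [hφ]
    rw [hin]
    rcases hx with h | h
    · rw [h]; exact hβ
    · rw [h]; exact hβ'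
  have hu0 := hcomp u (Or.inl (by rw [hu]; ring))
  have hv0 := hcomp v (Or.inr (by rw [hv]; ring))
  obtain ⟨r, hr⟩ := chain_root_int k c hcr j' (m + 1) (by omega) u hu0
  obtain ⟨s, hs⟩ := chain_root_int k c hcr j' (m + 1) (by omega) v hv0
  refine ⟨(chain c j').eval r, (chain c j').eval s, ?_⟩
  have hc : ((2 * c (j' + 1) : ℤ) : ℂ)
      = (((chain c j').eval r : ℤ) : ℂ) ^ 2 + (((chain c j').eval s : ℤ) : ℂ) ^ 2 := by
    rw [hr, hs, hu, hv]
    push_cast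
    ring
  exact_mod_cast hc
end

section
/- Suppose P(x) = ((⋯(x^2 - c_1)^2 ⋯)^2 - c_k ∈ ℤ[x] splits into linear factors over ℤ. For each j define D_j = 2^(j-1)# · ∏_{i=0}^{j-1} (2^(j-1-i)#_{3:4})^(2^i), where m# is the product of all primes ≤ m and m#_{3:4} is the product of all primes p ≤ m with p ≡ 3 (mod 4). Then D_j divides c_j for every j with 1 ≤ j ≤ k. -/
open Polynomial

/-- `m#_{3:4}`: the product of all primes `p ≤ m` with `p ≡ 3 (mod 4)`. -/
def primor34 (m : ℕ) : ℕ :=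
  ∏ p ∈ Finset.filter (fun p => Nat.Prime p ∧ p % 4 = 3) (Finset.range (m + 1)), p

def Dco (j : ℕ) : ℕ :=
  primor (2 ^ (j - 1)) * ∏ i ∈ Finset.range j, (primor34 (2 ^ (j - 1 - i))) ^ 2 ^ i

namespace Stmt12Aux

/-! ### Witness trees: a purely arithmetic encoding of crumbling chains -/

/-- `TW c j d` : the chain `((x²-c₁)²-⋯-c_{j-1})² - d` splits into linear
integer factors, encoded arithmetically. -/
def TW (c : ℕ → ℤ) : ℕ → ℤ → Prop
  | 0, _ => True
  | j + 1, d => ∃ s : ℤ, d = s ^ 2 ∧ TW c j (c j - s) ∧ TW c j (c j + s)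

lemma TW_succ {c : ℕ → ℤ} {j : ℕ} {d : ℤ} :
    TW c (j + 1) d ↔ ∃ s : ℤ, d = s ^ 2 ∧ TW c j (c j - s) ∧ TW c j (c j + s) := Iff.rfl

/-! ### Basic polynomial facts about chains -/

lemma chain_monic_natDegree (c : ℕ → ℤ) :
    ∀ j, (chain c j).Monic ∧ (chain c j).natDegree = 2 ^ j := by
  intro j
  induction j with
  | zero => exact ⟨monic_X, natDegree_X⟩
  | succ j ih =>
    obtain ⟨hm, hd⟩ := ih
    have hm2 : ((chain c j) ^ 2).Monic := hm.pow 2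
    have hd2 : ((chain c j) ^ 2).natDegree = 2 ^ (j + 1) := by
      rw [natDegree_pow, hd]; ring
    have hlt : (-(C (c (j + 1)))).degree < ((chain c j) ^ 2).degree := by
      refine lt_of_le_of_lt ((degree_neg _).le.trans degree_C_le) ?_
      rw [degree_eq_natDegree hm2.ne_zero, hd2]
      exact_mod_cast pow_pos (by norm_num) (j + 1)
    constructor
    · have := hm2.add_of_left hlt
      simpa [sub_eq_add_neg, chain] using this
    · show ((chain c j) ^ 2 - C (c (j + 1))).natDegree = 2 ^ (j + 1)
      rw [natDegree_sub_C, hd2]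

/-- A polynomial splits completely over ℤ. -/
def Sp (P : Polynomial ℤ) : Prop := P.Monic ∧ P.roots.card = P.natDegree

lemma roots_card_of_unit (q : Polynomial ℤ) (h1 : q.degree = 1)
    (hu : IsUnit q.leadingCoeff) : q.roots.card = 1 := by
  have hq := Polynomial.eq_X_add_C_of_degree_eq_one h1
  have haa : q.leadingCoeff * q.leadingCoeff = 1 := by
    rcases Int.isUnit_iff.mp hu with h | h <;> rw [h] <;> norm_num
  have hfac : q = C q.leadingCoeff * (X + C (q.leadingCoeff * q.coeff 0)) := by
    rw [mul_add, ← C_mul, ← mul_assoc, haa, one_mul]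
    exact hq
  rw [hfac, roots_C_mul _ hu.ne_zero]
  have : X + C (q.leadingCoeff * q.coeff 0) = X - C (-(q.leadingCoeff * q.coeff 0)) := by
    rw [map_neg, sub_neg_eq_add]
  rw [this, roots_X_sub_C]
  simp

lemma crumbles_sp {P : Polynomial ℤ} (h : Crumbles P) (hm : P.Monic) : Sp P := by
  obtain ⟨s, hdeg, rfl⟩ := h
  have h0 : (0 : Polynomial ℤ) ∉ s := by
    intro h0
    have := hdeg 0 h0
    simp at this
  refine ⟨hm, ?_⟩
  have hlc : (s.map Polynomial.leadingCoeff).prod = 1 := by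
    rw [← Polynomial.leadingCoeff_multiset_prod]
    exact hm
  have hunit : ∀ q ∈ s, IsUnit q.leadingCoeff := by
    intro q hq
    refine isUnit_of_dvd_one ?_
    rw [← hlc]
    exact Multiset.dvd_prod (Multiset.mem_map_of_mem _ hq)
  rw [Polynomial.roots_multiset_prod _ h0, Polynomial.natDegree_multiset_prod _ h0,
    Multiset.card_bind]
  have h1 : s.map (Multiset.card ∘ Polynomial.roots) = s.map fun _ => 1 :=
    Multiset.map_congr rfl fun q hq => roots_card_of_unit q (hdeg q hq) (hunit q hq)
  have h2 : s.map Polynomial.natDegree = s.map fun _ => 1 :=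
    Multiset.map_congr rfl fun q hq => natDegree_eq_of_degree_eq_some (hdeg q hq)
  rw [h1, h2]

lemma sp_mul {F G : Polynomial ℤ} (hf : F.Monic) (hg : G.Monic) (h : Sp (F * G)) :
    Sp F ∧ Sp G := by
  have hF0 : F ≠ 0 := hf.ne_zero
  have hG0 : G ≠ 0 := hg.ne_zero
  have hroots := Polynomial.roots_mul (mul_ne_zero hF0 hG0)
  have hdeg := Polynomial.natDegree_mul hF0 hG0
  have h2 := h.2
  rw [hroots, Multiset.card_add, hdeg] at h2
  have cF := Polynomial.card_roots' F
  have cG := Polynomial.card_roots' G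
  exact ⟨⟨hf, by omega⟩, ⟨hg, by omega⟩⟩

lemma sp_root {F : Polynomial ℤ} (h : Sp F) (hd : 0 < F.natDegree) :
    ∃ r : ℤ, F.eval r = 0 := by
  have hcard : F.roots.card ≠ 0 := by rw [h.2]; omega
  obtain ⟨r, hr⟩ := Multiset.exists_mem_of_ne_zero (s := F.roots) (by
    intro h0
    rw [h0] at hcard
    simp at hcard)
  exact ⟨r, (Polynomial.mem_roots'.mp hr).2⟩

/-! ### Transfer: from splitting to witness trees -/

lemma transfer (c : ℕ → ℤ) :
    ∀ (j : ℕ) (d : ℤ), Sp ((chain c j) ^ 2 - C d) → TW c (j + 1) d := by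
  intro j
  induction j with
  | zero =>
    intro d h
    obtain ⟨r, hr⟩ := sp_root h (by
      rw [natDegree_sub_C, natDegree_pow, (chain_monic_natDegree c 0).2]; norm_num)
    refine ⟨(chain c 0).eval r, ?_, trivial, trivial⟩
    have : ((chain c 0).eval r) ^ 2 - d = 0 := by simpa using hr
    omega
  | succ j ih =>
    intro d h
    have hcm := chain_monic_natDegree c (j + 1)
    obtain ⟨r, hr⟩ := sp_root h (by
      rw [natDegree_sub_C, natDegree_pow, hcm.2]
      positivity)
    set s : ℤ := (chain c (j + 1)).eval r with hs
    have hd : d = s ^ 2 := by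
      have : s ^ 2 - d = 0 := by simpa [hs] using hr
      omega
    have hdegpos : (0 : WithBot ℕ) < (chain c (j + 1)).degree := by
      rw [degree_eq_natDegree hcm.1.ne_zero, hcm.2]
      exact_mod_cast pow_pos (by norm_num) (j + 1)
    have hmono : ∀ a : ℤ, (chain c (j + 1) - C a).Monic := by
      intro a
      have := hcm.1.add_of_left (q := -(C a))
        (lt_of_le_of_lt ((degree_neg _).le.trans degree_C_le) hdegpos)
      simpa [sub_eq_add_neg] using this
    have hfac : (chain c (j + 1)) ^ 2 - C d
        = (chain c (j + 1) - C s) * (chain c (j + 1) + C s) := by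
      rw [hd, map_pow]
      ring
    rw [hfac] at h
    have hplus : (chain c (j + 1) + C s).Monic := by
      have := hmono (-s); simpa [map_neg, sub_neg_eq_add] using this
    obtain ⟨h1, h2⟩ := sp_mul (hmono s) hplus h
    have e1 : chain c (j + 1) - C s = (chain c j) ^ 2 - C (c (j + 1) + s) := by
      show (chain c j) ^ 2 - C (c (j + 1)) - C s = _
      rw [map_add]; ring
    have e2 : chain c (j + 1) + C s = (chain c j) ^ 2 - C (c (j + 1) - s) := by
      show (chain c j) ^ 2 - C (c (j + 1)) + C s = _
      rw [map_sub]; ring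
    rw [e1] at h1
    rw [e2] at h2
    exact ⟨s, hd, ih _ h2, ih _ h1⟩

lemma descent (c : ℕ → ℤ) :
    ∀ (n j : ℕ), 1 ≤ j → TW c (j + n) (c (j + n)) →
      ∃ t : ℤ, TW c j (c j + t) ∧ TW c j (c j - t) := by
  intro n
  induction n with
  | zero =>
    intro j hj h
    exact ⟨0, by simpa using h, by simpa using h⟩
  | succ n ih =>
    intro j hj h
    have h' : TW c ((j + 1) + n) (c ((j + 1) + n)) := by
      have : (j + 1) + n = j + (n + 1) := by omega
      rw [this]; exact h
    obtain ⟨t, h1, _⟩ := ih (j + 1) (by omega) h'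
    obtain ⟨s, _, hL, hR⟩ := h1
    exact ⟨s, hR, hL⟩

/-! ### The counting argument mod p -/

lemma count (c : ℕ → ℤ) {p : ℕ} (hp : p.Prime) (hp2 : p ≠ 2) :
    ∀ (m : ℕ) (S : Finset (ZMod p)),
      (∀ τ ∈ S, ∃ e : ℤ, ((e : ZMod p) = τ) ∧ TW c m e) →
      2 ^ m * (S.card - 1) + 1 ≤ p := by
  haveI : Fact p.Prime := ⟨hp⟩
  have hp1 : 2 ≤ p := hp.two_le
  have h2ne : (2 : ZMod p) ≠ 0 := by
    have : ((2 : ℕ) : ZMod p) ≠ 0 := by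
      rw [Ne, ZMod.natCast_eq_zero_iff]
      intro hdvd
      have := Nat.le_of_dvd (by norm_num) hdvd
      omega
    simpa using this
  intro m
  induction m with
  | zero =>
    intro S _
    have h1 : S.card ≤ p := by
      have := Finset.card_le_univ S
      simpa [ZMod.card] using this
    simp only [pow_zero, one_mul]
    omega
  | succ m ih =>
    intro S hS
    classical
    rcases Nat.eq_zero_or_pos S.card with h0 | hpos
    · simp [h0]; omega
    set Cnd : ZMod p → Prop := fun τ =>
      ∃ s : ℤ, (((s : ZMod p)) ^ 2 = τ) ∧ TW c m (c m - s) ∧ TW c m (c m + s) with hCnd_def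
    have hCnd : ∀ τ ∈ S, Cnd τ := by
      intro τ hτ
      obtain ⟨e, he, hTW⟩ := hS τ hτ
      obtain ⟨s, rfl, hL, hR⟩ := hTW
      refine ⟨s, ?_, hL, hR⟩
      rw [← he]; push_cast; ring
    set g : ZMod p → Finset (ZMod p) := fun τ =>
      if h : Cnd τ then
        {((c m + h.choose : ℤ) : ZMod p), ((c m - h.choose : ℤ) : ZMod p)}
      else ∅ with hg_def
    -- facts about g on S
    have hg_card : ∀ τ ∈ S, (τ ≠ 0 → (g τ).card = 2) ∧ 1 ≤ (g τ).card := by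
      intro τ hτ
      have h := hCnd τ hτ
      have hsq := h.choose_spec.1
      constructor
      · intro hτ0
        rw [hg_def]
        simp only [dif_pos h]
        rw [Finset.card_insert_of_notMem, Finset.card_singleton]
        simp only [Finset.mem_singleton]
        intro heq
        apply hτ0
        have : ((c m + h.choose : ℤ) : ZMod p) - ((c m - h.choose : ℤ) : ZMod p)
            = 2 * (h.choose : ZMod p) := by push_cast; ring
        rw [heq, sub_self] at this
        have hs0 : (h.choose : ZMod p) = 0 := by
          rcases mul_eq_zero.mp this.symm with h' | h'
          · exact absurd h' h2ne
          · exact h'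
        rw [← hsq, hs0]; ring
      · rw [hg_def]
        simp only [dif_pos h]
        have : ((c m + h.choose : ℤ) : ZMod p) ∈
            ({((c m + h.choose : ℤ) : ZMod p), ((c m - h.choose : ℤ) : ZMod p)} :
              Finset (ZMod p)) := by simp
        exact Finset.card_pos.mpr ⟨_, this⟩
    have hdisj : ∀ τ₁ ∈ S, ∀ τ₂ ∈ S, τ₁ ≠ τ₂ → Disjoint (g τ₁) (g τ₂) := by
      intro τ₁ hτ₁ τ₂ hτ₂ hne
      have h1 := hCnd τ₁ hτ₁
      have h2 := hCnd τ₂ hτ₂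
      rw [Finset.disjoint_left]
      intro x hx1 hx2
      rw [hg_def] at hx1 hx2
      simp only [dif_pos h1] at hx1
      simp only [dif_pos h2] at hx2
      have hs1 := h1.choose_spec.1
      have hs2 := h2.choose_spec.1
      have hx1' : x = ((c m + h1.choose : ℤ) : ZMod p) ∨
          x = ((c m - h1.choose : ℤ) : ZMod p) := by simpa using hx1
      have hx2' : x = ((c m + h2.choose : ℤ) : ZMod p) ∨
          x = ((c m - h2.choose : ℤ) : ZMod p) := by simpa using hx2
      apply hne
      rw [← hs1, ← hs2]
      rcases hx1' with e1 | e1 <;> rcases hx2' with e2 | e2 <;>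
      · have hxy := e1.symm.trans e2
        push_cast at hxy
        have ha : (h1.choose : ZMod p) = (h2.choose : ZMod p) ∨
            (h1.choose : ZMod p) = -(h2.choose : ZMod p) := by
          first
            | exact Or.inl (by linear_combination hxy)
            | exact Or.inl (by linear_combination -hxy)
            | exact Or.inr (by linear_combination hxy)
            | exact Or.inr (by linear_combination -hxy)
        rcases ha with ha | ha <;> rw [ha] <;> ring
    set S' : Finset (ZMod p) := S.biUnion g with hS'_def
    have hS'card : 2 * S.card - 1 ≤ S'.card := by
      rw [hS'_def, Finset.card_biUnion hdisj]
      by_cases h0S : (0 : ZMod p) ∈ S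
      · rw [← Finset.add_sum_erase _ _ h0S]
        have hsum : ∑ τ ∈ S.erase 0, (g τ).card = 2 * (S.card - 1) := by
          rw [Finset.sum_congr rfl (fun τ hτ => (hg_card τ (Finset.mem_of_mem_erase hτ)).1
            (Finset.ne_of_mem_erase hτ))]
          rw [Finset.sum_const, Finset.card_erase_of_mem h0S]
          ring
        have := (hg_card 0 h0S).2
        omega
      · have hsum : ∑ τ ∈ S, (g τ).card = 2 * S.card := by
          rw [Finset.sum_congr rfl (fun τ hτ => (hg_card τ hτ).1
            (fun h => h0S (h ▸ hτ)))]
          rw [Finset.sum_const]; ring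
        omega
    have hS'rep : ∀ τ' ∈ S', ∃ e : ℤ, ((e : ZMod p) = τ') ∧ TW c m e := by
      intro τ' hτ'
      obtain ⟨τ, hτ, hx⟩ := Finset.mem_biUnion.mp hτ'
      have h := hCnd τ hτ
      rw [hg_def] at hx
      simp only [dif_pos h] at hx
      rcases Finset.mem_insert.mp hx with e1 | e1
      · exact ⟨c m + h.choose, e1.symm, h.choose_spec.2.2⟩
      · rw [Finset.mem_singleton] at e1
        exact ⟨c m - h.choose, e1.symm, h.choose_spec.2.1⟩
    have hIH := ih S' hS'rep
    have hmul : 2 ^ (m + 1) * (S.card - 1) ≤ 2 ^ m * (S'.card - 1) := by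
      have h1 : 2 * (S.card - 1) ≤ S'.card - 1 := by omega
      calc 2 ^ (m + 1) * (S.card - 1) = 2 ^ m * (2 * (S.card - 1)) := by ring
        _ ≤ 2 ^ m * (S'.card - 1) := Nat.mul_le_mul_left _ h1
    omega

/-! ### Divisibility lemmas -/

lemma sq_mod_four (z : ℤ) : z ^ 2 % 4 = 0 ∨ z ^ 2 % 4 = 1 := by
  rcases Int.even_or_odd z with ⟨w, rfl⟩ | ⟨w, rfl⟩
  · left; have : (w + w) ^ 2 = 4 * w ^ 2 := by ring
    omega
  · right; have : (2 * w + 1) ^ 2 = 4 * (w ^ 2 + w) + 1 := by ring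
    omega

lemma n1 (c : ℕ → ℤ) {p : ℕ} (hp : p.Prime) :
    ∀ {j : ℕ} {d : ℤ}, TW c j d → p ≤ 2 ^ (j - 1) → ((p : ℤ)) ^ 2 ∣ d := by
  intro j d h hle
  have hp2 := hp.two_le
  have hj : 2 ≤ j := by
    rcases j with _ | j
    · norm_num at hle; omega
    · rcases j with _ | j
      · norm_num at hle; omega
      · omega
  obtain ⟨m, rfl⟩ : ∃ m, j = m + 1 := ⟨j - 1, by omega⟩
  have hm1 : 1 ≤ m := by omega
  obtain ⟨s, rfl, hL, hR⟩ := h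
  suffices hdvd : (p : ℤ) ∣ s by
    have := mul_dvd_mul hdvd hdvd
    simpa [pow_two] using this
  by_cases hpeq : p = 2
  · subst hpeq
    obtain ⟨m', rfl⟩ : ∃ m', m = m' + 1 := ⟨m - 1, by omega⟩
    obtain ⟨u, hu, _, _⟩ := hL
    obtain ⟨v, hv, _, _⟩ := hR
    have h2s : 2 * s = v ^ 2 - u ^ 2 := by omega
    have h4u := sq_mod_four u
    have h4v := sq_mod_four v
    have : (2 : ℤ) ∣ s := by omega
    exact_mod_cast this
  · by_contra hps
    haveI : Fact p.Prime := ⟨hp⟩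
    have hcount := count c hp hpeq m
      ({((c m + s : ℤ) : ZMod p), ((c m - s : ℤ) : ZMod p)} : Finset (ZMod p))
      (by
        intro τ hτ
        rcases Finset.mem_insert.mp hτ with e | e
        · exact ⟨c m + s, e.symm ▸ rfl, hR⟩
        · rw [Finset.mem_singleton] at e
          exact ⟨c m - s, e.symm ▸ rfl, hL⟩)
    have hcard : ({((c m + s : ℤ) : ZMod p), ((c m - s : ℤ) : ZMod p)} :
        Finset (ZMod p)).card = 2 := by
      rw [Finset.card_insert_of_notMem, Finset.card_singleton]
      simp only [Finset.mem_singleton]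
      intro heq
      have hdiff : (((c m + s : ℤ) - (c m - s : ℤ) : ℤ) : ZMod p) = 0 := by
        push_cast [heq]
        ring
      have : ((c m + s : ℤ) - (c m - s)) = 2 * s := by ring
      rw [this] at hdiff
      have := (ZMod.intCast_zmod_eq_zero_iff_dvd _ _).mp hdiff
      rcases (Int.Prime.dvd_mul' (by exact_mod_cast hp) this) with h' | h'
      · have : (p : ℤ) ≤ 2 := Int.le_of_dvd (by norm_num) h'
        omega
      · exact hps h'
    rw [hcard] at hcount
    have : p ≤ 2 ^ m := by
      simpa using hle
    omega

lemma nA (c : ℕ → ℤ) {p : ℕ} (hp : p.Prime) (hp2 : p ≠ 2) :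
    ∀ (i : ℕ) {j : ℕ} {d : ℤ}, TW c j d → p ≤ 2 ^ (j - 1 - i) →
      ((p : ℤ)) ^ (2 ^ (i + 1)) ∣ d := by
  have hcop2 : IsCoprime ((p : ℤ)) 2 := by
    rw [Int.isCoprime_iff_gcd_eq_one]
    have : Nat.Coprime p 2 := (Nat.Prime.coprime_iff_not_dvd hp).mpr
      (by intro h; exact hp2 ((Nat.prime_dvd_prime_iff_eq hp Nat.prime_two).mp h))
    simpa [Int.gcd] using this
  intro i
  induction i with
  | zero =>
    intro j d h hle
    have := n1 c hp h (by simpa using hle)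
    simpa using this
  | succ i ih =>
    intro j d h hle
    have hp3 : 3 ≤ p := by
      have := hp.two_le; omega
    have hj : 2 ≤ j := by
      by_contra hj
      have : j - 1 - (i + 1) = 0 := by omega
      rw [this] at hle
      simp at hle
      omega
    obtain ⟨m, rfl⟩ : ∃ m, j = m + 1 := ⟨j - 1, by omega⟩
    obtain ⟨s, rfl, hL, hR⟩ := h
    have hle' : p ≤ 2 ^ (m - 1 - i) := by
      have : m - 1 - i = m + 1 - 1 - (i + 1) := by omega
      rw [this]; exact hle
    have h1 := ih hL hle'
    have h2 := ih hR hle'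
    have hdvd2s : ((p : ℤ)) ^ (2 ^ (i + 1)) ∣ 2 * s := by
      have := dvd_sub h2 h1
      have heq : (c m + s) - (c m - s) = 2 * s := by ring
      rwa [heq] at this
    have hdvds : ((p : ℤ)) ^ (2 ^ (i + 1)) ∣ s :=
      (hcop2.pow_left).dvd_of_dvd_mul_left hdvd2s
    have := mul_dvd_mul hdvds hdvds
    have heq : ((p : ℤ)) ^ (2 ^ (i + 1)) * ((p : ℤ)) ^ (2 ^ (i + 1))
        = ((p : ℤ)) ^ (2 ^ (i + 2)) := by
      rw [← pow_add]
      congr 1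
      ring
    rw [heq, ← pow_two] at this
    simpa [pow_two] using this

/-! ### Factorization of `Dco` -/

lemma primor_factorization (m p : ℕ) :
    (primor m).factorization p = if p.Prime ∧ p ≤ m then 1 else 0 := by
  classical
  have h1 : (primor m).factorization p
      = ∑ q ∈ Finset.filter Nat.Prime (Finset.range (m + 1)), (Nat.factorization q) p := by
    unfold primor
    rw [Nat.factorization_prod (fun q hq => ((Finset.mem_filter.mp hq).2.pos).ne')]
    rw [Finsupp.finset_sum_apply]
  have h2 : ∑ q ∈ Finset.filter Nat.Prime (Finset.range (m + 1)), (Nat.factorization q) p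
      = ∑ q ∈ Finset.filter Nat.Prime (Finset.range (m + 1)),
          (if q = p then 1 else 0) :=
    Finset.sum_congr rfl fun q hq => by
      rw [Nat.Prime.factorization (Finset.mem_filter.mp hq).2, Finsupp.single_apply]
  rw [h1, h2, Finset.sum_ite_eq' _ p (fun _ => 1)]
  simp only [Finset.mem_filter, Finset.mem_range, Nat.lt_succ_iff]
  by_cases h : p.Prime ∧ p ≤ m
  · rw [if_pos ⟨h.2, h.1⟩, if_pos h]
  · rw [if_neg (fun h' => h ⟨h'.2, h'.1⟩), if_neg h]

lemma primor34_factorization (m p : ℕ) :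
    (primor34 m).factorization p =
      if p.Prime ∧ p % 4 = 3 ∧ p ≤ m then 1 else 0 := by
  classical
  have h1 : (primor34 m).factorization p
      = ∑ q ∈ Finset.filter (fun q => Nat.Prime q ∧ q % 4 = 3) (Finset.range (m + 1)),
          (Nat.factorization q) p := by
    unfold primor34
    rw [Nat.factorization_prod (fun q hq => ((Finset.mem_filter.mp hq).2.1.pos).ne')]
    rw [Finsupp.finset_sum_apply]
  have h2 : ∑ q ∈ Finset.filter (fun q => Nat.Prime q ∧ q % 4 = 3) (Finset.range (m + 1)),
          (Nat.factorization q) p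
      = ∑ q ∈ Finset.filter (fun q => Nat.Prime q ∧ q % 4 = 3) (Finset.range (m + 1)),
          (if q = p then 1 else 0) :=
    Finset.sum_congr rfl fun q hq => by
      rw [Nat.Prime.factorization (Finset.mem_filter.mp hq).2.1, Finsupp.single_apply]
  rw [h1, h2, Finset.sum_ite_eq' _ p (fun _ => 1)]
  simp only [Finset.mem_filter, Finset.mem_range, Nat.lt_succ_iff]
  by_cases h : p.Prime ∧ p % 4 = 3 ∧ p ≤ m
  · rw [if_pos ⟨h.2.2, h.1, h.2.1⟩, if_pos h]
  · rw [if_neg (fun h' => h ⟨h'.2.1, h'.2.2, h'.1⟩), if_neg h]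

lemma primor_pos (m : ℕ) : 0 < primor m :=
  Finset.prod_pos fun q hq => (Finset.mem_filter.mp hq).2.pos

lemma primor34_pos (m : ℕ) : 0 < primor34 m :=
  Finset.prod_pos fun q hq => (Finset.mem_filter.mp hq).2.1.pos

lemma Dco_pos (j : ℕ) : 0 < Dco j := by
  unfold Dco
  exact Nat.mul_pos (primor_pos _)
    (Finset.prod_pos fun i _ => pow_pos (primor34_pos _) _)

lemma Dco_factorization (j p : ℕ) :
    (Dco j).factorization p =
      (if p.Prime ∧ p ≤ 2 ^ (j - 1) then 1 else 0)
      + ∑ i ∈ Finset.range j,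
          2 ^ i * (if p.Prime ∧ p % 4 = 3 ∧ p ≤ 2 ^ (j - 1 - i) then 1 else 0) := by
  classical
  unfold Dco
  rw [Nat.factorization_mul (primor_pos _).ne'
    (Finset.prod_pos fun i _ => pow_pos (primor34_pos _) _).ne']
  rw [Nat.factorization_prod (fun i _ => (pow_pos (primor34_pos _) _).ne')]
  rw [Finsupp.add_apply, Finsupp.finset_sum_apply]
  rw [primor_factorization]
  congr 1
  refine Finset.sum_congr rfl fun i _ => ?_
  rw [Nat.factorization_pow, Finsupp.smul_apply, primor34_factorization]
  simp [smul_eq_mul]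

lemma sum_two_pow (n : ℕ) : ∑ i ∈ Finset.range n, 2 ^ i = 2 ^ n - 1 := by
  induction n with
  | zero => simp
  | succ n ih =>
    rw [Finset.sum_range_succ, ih]
    have : 1 ≤ 2 ^ n := Nat.one_le_two_pow
    have : 2 ^ (n + 1) = 2 * 2 ^ n := by ring
    omega

end Stmt12Aux

theorem stmt_12 (k : ℕ) (c : ℕ → ℤ) (hcr : Crumbles (chain c k)) :
    ∀ j, 1 ≤ j → j ≤ k → (Dco j : ℤ) ∣ c j := by
  classical
  open Stmt12Aux in
  intro j hj1 hjk
  have hk1 : 1 ≤ k := le_trans hj1 hjk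
  -- get the witness tree at the top
  have hsp : Sp (chain c k) := crumbles_sp hcr (chain_monic_natDegree c k).1
  have hTWk : TW c k (c k) := by
    obtain ⟨m, rfl⟩ : ∃ m, k = m + 1 := ⟨k - 1, by omega⟩
    exact transfer c m (c (m + 1)) hsp
  obtain ⟨t, hA, hB⟩ := by
    refine descent c (k - j) j hj1 ?_
    have : j + (k - j) = k := by omega
    rw [this]; exact hTWk
  by_cases hc0 : c j = 0
  · rw [hc0]; exact dvd_zero _
  -- combine per-prime information
  have hcomb : ∀ (e : ℕ), ((2 : ℤ) ∣ e) → ∀ q : ℤ, q ^ e ∣ (c j + t) → q ^ e ∣ (c j - t) →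
      q ^ e ∣ 2 * c j := by
    intro e _ q h1 h2
    have := dvd_add h1 h2
    have heq : (c j + t) + (c j - t) = 2 * c j := by ring
    rwa [heq] at this
  have hnatabs : (c j).natAbs ≠ 0 := fun h => hc0 (Int.natAbs_eq_zero.mp h)
  rw [show ((Dco j : ℤ)) = ((Dco j : ℕ) : ℤ) from rfl]
  rw [← Int.dvd_natAbs]
  rw [Int.natCast_dvd_natCast]
  rw [← Nat.factorization_le_iff_dvd (Dco_pos j).ne' hnatabs]
  intro p
  by_cases hp : p.Prime
  swap
  · rw [Nat.factorization_eq_zero_of_not_prime _ hp]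
    exact Nat.zero_le _
  -- p is prime
  rw [Dco_factorization]
  rw [← Nat.Prime.pow_dvd_iff_le_factorization hp hnatabs]
  by_cases hple : p ≤ 2 ^ (j - 1)
  swap
  · -- exponent is 0
    have hz : ∀ i ∈ Finset.range j,
        2 ^ i * (if p.Prime ∧ p % 4 = 3 ∧ p ≤ 2 ^ (j - 1 - i) then 1 else 0) = 0 := by
      intro i _
      rw [if_neg, mul_zero]
      rintro ⟨_, _, hle⟩
      exact hple (hle.trans (Nat.pow_le_pow_right (by norm_num) (by omega)))
    rw [Finset.sum_congr rfl hz, Finset.sum_const_zero, if_neg (fun h => hple h.2)]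
    simp
  have key2 : ((p : ℤ)) ^ 2 ∣ 2 * c j :=
    hcomb 2 (by norm_num) _ (n1 c hp hA hple) (n1 c hp hB hple)
  have keyp : (p : ℤ) ∣ c j := by
    by_cases hp2 : p = 2
    · subst hp2
      obtain ⟨q, hq⟩ := key2
      have : (2 : ℤ) ∣ c j := by push_cast at hq; omega
      exact_mod_cast this
    · have hcop2 : IsCoprime ((p : ℤ)) 2 := by
        rw [Int.isCoprime_iff_gcd_eq_one]
        have : Nat.Coprime p 2 := (Nat.Prime.coprime_iff_not_dvd hp).mpr
          (by intro h; exact hp2 ((Nat.prime_dvd_prime_iff_eq hp Nat.prime_two).mp h))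
        simpa [Int.gcd] using this
      have hpdvd : (p : ℤ) ∣ 2 * c j := dvd_trans (dvd_pow_self _ (by norm_num)) key2
      exact hcop2.dvd_of_dvd_mul_left hpdvd
  by_cases hp4 : p % 4 = 3
  swap
  · -- exponent is 1
    have hz : ∀ i ∈ Finset.range j,
        2 ^ i * (if p.Prime ∧ p % 4 = 3 ∧ p ≤ 2 ^ (j - 1 - i) then 1 else 0) = 0 := by
      intro i _
      rw [if_neg, mul_zero]
      rintro ⟨_, h4, _⟩
      exact hp4 h4
    rw [Finset.sum_congr rfl hz, Finset.sum_const_zero, if_pos ⟨hp, hple⟩]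
    rw [← Int.natCast_dvd_natCast]
    rw [Int.dvd_natAbs]
    push_cast
    simpa using keyp
  -- p ≡ 3 mod 4 : exponent is 2^(j - L)
  have hp2 : p ≠ 2 := by omega
  have hp3 : 3 ≤ p := by have := hp.two_le; omega
  set L := Nat.clog 2 p with hL
  have hL1 : 1 ≤ L := Nat.clog_pos (by norm_num) (by omega)
  have hLj : L ≤ j - 1 := (Nat.clog_le_iff_le_pow (by norm_num)).mpr hple
  have hcond : ∀ i, (p ≤ 2 ^ (j - 1 - i)) ↔ i < j - L := by
    intro i
    rw [← Nat.clog_le_iff_le_pow (by norm_num)]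
    omega
  have hsum : ∑ i ∈ Finset.range j,
      2 ^ i * (if p.Prime ∧ p % 4 = 3 ∧ p ≤ 2 ^ (j - 1 - i) then 1 else 0)
      = 2 ^ (j - L) - 1 := by
    have : ∀ i ∈ Finset.range j,
        2 ^ i * (if p.Prime ∧ p % 4 = 3 ∧ p ≤ 2 ^ (j - 1 - i) then 1 else 0)
        = if i < j - L then 2 ^ i else 0 := by
      intro i _
      by_cases h : i < j - L
      · rw [if_pos ⟨hp, hp4, (hcond i).mpr h⟩, if_pos h, mul_one]
      · rw [if_neg, if_neg h, mul_zero]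
        rintro ⟨_, _, hle⟩
        exact h ((hcond i).mp hle)
    rw [Finset.sum_congr rfl this, ← Finset.sum_filter]
    have hfilt : (Finset.range j).filter (fun i => i < j - L) = Finset.range (j - L) := by
      ext i
      simp only [Finset.mem_filter, Finset.mem_range]
      omega
    rw [hfilt, sum_two_pow]
  rw [hsum, if_pos ⟨hp, hple⟩]
  have hexp : 1 + (2 ^ (j - L) - 1) = 2 ^ (j - L) := by
    have : 1 ≤ 2 ^ (j - L) := Nat.one_le_two_pow
    omega
  rw [hexp]
  -- now show p ^ 2^(j-L) ∣ (c j).natAbs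
  have hnA_le : p ≤ 2 ^ (j - 1 - (j - 1 - L)) := by
    have : j - 1 - (j - 1 - L) = L := by omega
    rw [this]
    exact Nat.le_pow_clog (by norm_num) p
  have hE : 2 ^ ((j - 1 - L) + 1) = 2 ^ (j - L) := by
    congr 1
    omega
  have h1 := nA c hp hp2 (j - 1 - L) hA hnA_le
  have h2 := nA c hp hp2 (j - 1 - L) hB hnA_le
  rw [hE] at h1 h2
  have hfull : ((p : ℤ)) ^ (2 ^ (j - L)) ∣ 2 * c j := by
    have := dvd_add h1 h2
    have heq : (c j + t) + (c j - t) = 2 * c j := by ring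
    rwa [heq] at this
  have hcop2 : IsCoprime ((p : ℤ)) 2 := by
    rw [Int.isCoprime_iff_gcd_eq_one]
    have : Nat.Coprime p 2 := (Nat.Prime.coprime_iff_not_dvd hp).mpr
      (by intro h; exact hp2 ((Nat.prime_dvd_prime_iff_eq hp Nat.prime_two).mp h))
    simpa [Int.gcd] using this
  have hdvd : ((p : ℤ)) ^ (2 ^ (j - L)) ∣ c j :=
    (hcop2.pow_left).dvd_of_dvd_mul_left hfull
  rw [← Int.natCast_dvd_natCast]
  rw [Int.dvd_natAbs]
  push_cast
  exact hdvd
end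

section
/- There exists an absolute constant λ > 0 such that: if P(x) = ((⋯(x^2 - c_1)^2 ⋯)^2 - c_k ∈ ℤ[x] splits into linear factors over ℤ, k ≥ 3, and c_k > 0, then ln(c_j) > λ · k · 2^j for all j with 1 ≤ j ≤ k. -/
open Polynomial

/-!
If `P_k = chain c k` crumbles, then for every value `v` of `P_{n+1}` at a root of `P_k` both
`±√(c_{n+1} + v)` are integers and are values of `P_n` at roots of `P_k`. Hence `P_l` takes at
least `2^(k-l-2) + 1` distinct nonnegative values at those roots, all at most `c_l`. Following the
nonnegative square roots from such a value down to `X` is injective into `ℤ`, and each step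
`t ↦ √(c_j + t)` shrinks distances by a factor `2√c_j`. Comparing spreads gives
`4^(k-2) c_1 ⋯ c_l ≤ c_l^2` for `l ≤ k - 2`, and likewise `4^(k-2) c_1 ⋯ c_(k-2) ≤ 4 c_k`.
These force the doubly exponential growth `c_l ≥ 2^((k-2) 2^l)`, whence `λ = log 2 / 16`.
-/

open Finset

theorem Crumbles.splits {P : ℤ[X]} (hP : Crumbles P) (hm : P.Monic) : P.Splits := by
  obtain ⟨s, hdeg, rfl⟩ := hP
  refine Splits.multisetProd fun q hq => ?_
  have : IsUnit q.leadingCoeff := isUnit_of_dvd_one <| by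
    rw [← hm.leadingCoeff, leadingCoeff_multiset_prod]
    exact Multiset.dvd_prod (Multiset.mem_map_of_mem _ hq)
  exact .of_degree_le_one_of_invertible (hdeg q hq).le this.invertible

namespace chain

variable {c : ℕ → ℤ}

theorem natDegree (c : ℕ → ℤ) : ∀ n, (chain c n).natDegree = 2 ^ n
  | 0 => natDegree_X
  | n + 1 => by rw [chain, natDegree_sub_C, natDegree_pow, natDegree c n, pow_succ, mul_comm]

theorem monic (c : ℕ → ℤ) : ∀ n, (chain c n).Monic
  | 0 => monic_X
  | n + 1 => ((monic c n).pow 2).sub_of_left <| degree_C_le.trans_lt <| by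
      rw [degree_eq_natDegree ((monic c n).pow 2).ne_zero, natDegree_pow, natDegree]
      exact_mod_cast by positivity

theorem natDegree_sub_C (n : ℕ) (t : ℤ) : (chain c n - C t).natDegree = 2 ^ n := by
  rw [Polynomial.natDegree_sub_C, natDegree]

theorem succ_sub_C_eq_mul (n : ℕ) (s : ℤ) :
    chain c (n + 1) - C (s ^ 2 - c (n + 1)) = (chain c n - C s) * (chain c n - C (-s)) := by
  simp only [chain, map_sub, map_pow, map_neg]
  ring

theorem sub_C_ne_zero (n : ℕ) (t : ℤ) : chain c n - C t ≠ 0 :=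
  ne_zero_of_natDegree_gt (n := 0) <| by rw [natDegree_sub_C]; positivity

theorem sqrt_sq_of_splits {n : ℕ} {t : ℤ} (h : (chain c (n + 1) - C t).Splits) :
    Int.sqrt (c (n + 1) + t) ^ 2 = c (n + 1) + t := by
  obtain ⟨r, hr⟩ := h.exists_eval_eq_zero <| by
    rw [degree_eq_natDegree (sub_C_ne_zero _ _), natDegree_sub_C]
    exact_mod_cast (pow_pos two_pos _).ne'
  rw [sq, ← Int.exists_mul_self]
  refine ⟨(chain c n).eval r, ?_⟩
  simp only [chain, eval_sub, eval_pow, eval_C] at hr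
  linarith

theorem sqrt_coeff_sq_of_splits {n : ℕ} (h : (chain c (n + 1)).Splits) :
    Int.sqrt (c (n + 1)) ^ 2 = c (n + 1) := by
  simpa using sqrt_sq_of_splits (t := 0) (by simpa using h)

theorem splits_of_sq_eq {n : ℕ} {t s : ℤ} (h : (chain c (n + 1) - C t).Splits)
    (hs : s ^ 2 = c (n + 1) + t) : (chain c n - C s).Splits := by
  have hne := sub_C_ne_zero (c := c) (n + 1) t
  rw [show t = s ^ 2 - c (n + 1) by linarith, succ_sub_C_eq_mul] at h hne
  exact h.of_dvd hne (dvd_mul_right _ _)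

theorem le_coeff_of_splits_neg {n : ℕ} {w : ℤ} (h : (chain c (n + 1) - C (-w)).Splits) :
    w ≤ c (n + 1) := by
  nlinarith [sqrt_sq_of_splits h]

end chain

/-- The values of `chain c n` at the integer roots of `chain c (n + d)`, when the latter splits:
each value `v` of `chain c (n + 1)` comes from the two values `±√(c (n + 1) + v)` of
`chain c n`. -/
def level (c : ℕ → ℤ) : ℕ → ℕ → Finset ℤ
  | _, 0 => {0}
  | n, d + 1 =>
    ((level c (n + 1) d).image fun v => Int.sqrt (c (n + 1) + v)) ∪
      ((level c (n + 1) d).image fun v => Int.sqrt (c (n + 1) + v)).image (- ·)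

def sqrtLevel (c : ℕ → ℤ) (n d : ℕ) : Finset ℤ :=
  (level c (n + 1) d).image fun v => Int.sqrt (c (n + 1) + v)

section level

variable {c : ℕ → ℤ}

theorem level_succ (n d : ℕ) :
    level c n (d + 1) = sqrtLevel c n d ∪ (sqrtLevel c n d).image (- ·) := rfl

theorem level_one (n : ℕ) :
    level c n 1 = {Int.sqrt (c (n + 1)), -Int.sqrt (c (n + 1))} := by
  simp [level]

theorem splits_of_mem_level {n d : ℕ} (hk : (chain c (n + d)).Splits) {u : ℤ}
    (hu : u ∈ level c n d) : (chain c n - C u).Splits := by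
  induction d generalizing n u with
  | zero =>
    rw [level, mem_singleton] at hu
    simpa [hu] using hk
  | succ d ih =>
    have hv : ∀ v ∈ level c (n + 1) d, (chain c (n + 1) - C v).Splits :=
      fun v hv => ih (by rwa [Nat.add_right_comm]) hv
    simp only [level_succ, sqrtLevel, mem_union, mem_image] at hu
    obtain ⟨v, hv', rfl⟩ | ⟨_, ⟨v, hv', rfl⟩, rfl⟩ := hu
    · exact chain.splits_of_sq_eq (hv v hv') (chain.sqrt_sq_of_splits (hv v hv'))
    · exact chain.splits_of_sq_eq (hv v hv') (by rw [neg_sq, chain.sqrt_sq_of_splits (hv v hv')])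

theorem nonneg_and_splits_of_mem_sqrtLevel {n d : ℕ} (hk : (chain c (n + (d + 1))).Splits)
    {w : ℤ} (hw : w ∈ sqrtLevel c n d) :
    0 ≤ w ∧ (chain c n - C w).Splits ∧ (chain c n - C (-w)).Splits := by
  refine ⟨?_, splits_of_mem_level hk ?_, splits_of_mem_level hk ?_⟩
  · obtain ⟨v, -, rfl⟩ := mem_image.mp hw
    exact Int.sqrt_nonneg _
  · exact mem_union_left _ hw
  · exact mem_union_right _ (mem_image_of_mem _ hw)

theorem card_sqrtLevel {n d : ℕ} (hk : (chain c (n + 1 + d)).Splits) :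
    #(sqrtLevel c n d) = #(level c (n + 1) d) := by
  refine card_image_of_injOn fun v hv v' hv' h => ?_
  have hsq := chain.sqrt_sq_of_splits (splits_of_mem_level hk hv)
  have hsq' := chain.sqrt_sq_of_splits (splits_of_mem_level hk hv')
  rw [h] at hsq
  linarith

theorem two_mul_card_sqrtLevel_le (n d : ℕ) :
    2 * #(sqrtLevel c n d) ≤ #(level c n (d + 1)) + 1 := by
  have hinter : sqrtLevel c n d ∩ (sqrtLevel c n d).image (- ·) ⊆ {0} := by
    intro x hx
    simp only [sqrtLevel, mem_inter, mem_image] at hx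
    obtain ⟨⟨v, -, rfl⟩, _, ⟨v', -, rfl⟩, h⟩ := hx
    have := Int.sqrt_nonneg (c (n + 1) + v)
    have := Int.sqrt_nonneg (c (n + 1) + v')
    simp only [mem_singleton]
    omega
  have := card_union_add_card_inter (sqrtLevel c n d) ((sqrtLevel c n d).image (- ·))
  rw [card_image_of_injective _ neg_injective, ← level_succ] at this
  have := card_le_card hinter
  simp only [card_singleton] at this
  omega

theorem two_pow_add_one_le_card_level {n d : ℕ} (hk : (chain c (n + (d + 1))).Splits)
    (hck : 0 < c (n + (d + 1))) : 2 ^ d + 1 ≤ #(level c n (d + 1)) := by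
  induction d generalizing n with
  | zero =>
    have hm := chain.sqrt_coeff_sq_of_splits hk
    have hm0 : Int.sqrt (c (n + 1)) ≠ 0 := fun h0 => by simp_all
    simp only [level, image_singleton, add_zero, singleton_union, pow_zero,
      Nat.reduceAdd]
    rw [card_pair (Ne.symm (neg_ne_self.mpr hm0))]
  | succ d ih =>
    have h1 := ih (n := n + 1) (by rwa [Nat.add_right_comm]) (by rwa [Nat.add_right_comm])
    have h2 := two_mul_card_sqrtLevel_le (c := c) n (d + 1)
    rw [card_sqrtLevel (by rwa [Nat.add_right_comm])] at h2
    rw [pow_succ]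
    omega

theorem two_pow_add_one_le_card_sqrtLevel {n d : ℕ} (hk : (chain c (n + (d + 2))).Splits)
    (hck : 0 < c (n + (d + 2))) : 2 ^ d + 1 ≤ #(sqrtLevel c n (d + 1)) := by
  have hn : n + 1 + (d + 1) = n + (d + 2) := by omega
  rw [card_sqrtLevel (hn ▸ hk)]
  exact two_pow_add_one_le_card_level (hn ▸ hk) (hn ▸ hck)

end level

/-- The root of `chain c n - C t` reached by always taking the nonnegative square root. -/
def nestedSqrt (c : ℕ → ℤ) : ℕ → ℤ → ℤ
  | 0, t => t
  | n + 1, t => nestedSqrt c n (Int.sqrt (c (n + 1) + t))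

section nestedSqrt

variable {c : ℕ → ℤ}

theorem nestedSqrt_strictMonoOn (n : ℕ) :
    StrictMonoOn (nestedSqrt c n) {t | 0 ≤ t ∧ (chain c n - C t).Splits} := by
  induction n with
  | zero => exact strictMono_id.strictMonoOn _
  | succ n ih =>
    intro t ⟨_, ht⟩ t' ⟨_, ht'⟩ hlt
    have hs := chain.sqrt_sq_of_splits ht
    have hs' := chain.sqrt_sq_of_splits ht'
    refine ih ⟨Int.sqrt_nonneg _, chain.splits_of_sq_eq ht hs⟩
      ⟨Int.sqrt_nonneg _, chain.splits_of_sq_eq ht' hs'⟩ ?_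
    exact lt_of_pow_lt_pow_left₀ 2 (Int.sqrt_nonneg _) (by rw [hs, hs']; linarith)

theorem nestedSqrt_sub_sq_mul_prod_le {n : ℕ} (hc : ∀ j ∈ Icc 1 n, 0 ≤ c j) {t t' : ℤ}
    (ht0 : 0 ≤ t) (htt' : t ≤ t') (ht : (chain c n - C t).Splits)
    (ht' : (chain c n - C t').Splits) :
    (nestedSqrt c n t' - nestedSqrt c n t) ^ 2 * ∏ j ∈ Icc 1 n, (4 * c j) ≤ (t' - t) ^ 2 := by
  induction n generalizing t t' with
  | zero => simp [nestedSqrt]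
  | succ n ih =>
    set s := Int.sqrt (c (n + 1) + t)
    set s' := Int.sqrt (c (n + 1) + t')
    have hs : s ^ 2 = c (n + 1) + t := chain.sqrt_sq_of_splits ht
    have hs' : s' ^ 2 = c (n + 1) + t' := chain.sqrt_sq_of_splits ht'
    have hs0 : 0 ≤ s := Int.sqrt_nonneg _
    have hss' : s ≤ s' := pow_le_pow_iff_left₀ hs0 (Int.sqrt_nonneg _) two_ne_zero |>.mp
      (by rw [hs, hs']; linarith)
    have hIH := ih (fun j hj => hc j (Icc_subset_Icc_right n.le_succ hj)) hs0 hss'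
      (chain.splits_of_sq_eq ht hs) (chain.splits_of_sq_eq ht' hs')
    have hc0 : 0 ≤ c (n + 1) := hc _ (right_mem_Icc.mpr n.succ_pos)
    -- each square root contracts distances by the factor `s + s' ≥ 2 √(c (n + 1))`
    have hcontract : 4 * c (n + 1) ≤ (s + s') ^ 2 := by nlinarith
    rw [prod_Icc_succ_top (by omega), ← mul_assoc]
    calc (nestedSqrt c n s' - nestedSqrt c n s) ^ 2 * (∏ j ∈ Icc 1 n, (4 * c j)) *
          (4 * c (n + 1))
        ≤ (s' - s) ^ 2 * (4 * c (n + 1)) := mul_le_mul_of_nonneg_right hIH (by positivity)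
      _ ≤ (s' - s) ^ 2 * (s + s') ^ 2 := mul_le_mul_of_nonneg_left hcontract (sq_nonneg _)
      _ = (t' - t) ^ 2 := by linear_combination (s' ^ 2 - s ^ 2 + t' - t) * (hs' - hs)

theorem card_sub_one_sq_mul_prod_le {n : ℕ} (hc : ∀ j ∈ Icc 1 n, 0 ≤ c j) {W : Finset ℤ}
    {M : ℤ} (hW : ∀ w ∈ W, 0 ≤ w ∧ w ≤ M ∧ (chain c n - C w).Splits) :
    ((#W - 1 : ℕ) : ℤ) ^ 2 * ∏ j ∈ Icc 1 n, (4 * c j) ≤ M ^ 2 := by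
  rcases W.eq_empty_or_nonempty with rfl | hne
  · simp [sq_nonneg]
  set F := nestedSqrt c n
  set a := W.max' hne
  set b := W.min' hne
  have hmem : ∀ w ∈ W, w ∈ {t | 0 ≤ t ∧ (chain c n - C t).Splits} :=
    fun w hw => ⟨(hW w hw).1, (hW w hw).2.2⟩
  have hmono := nestedSqrt_strictMonoOn (c := c) n
  -- the `#W` distinct integers `F w` lie between `F b` and `F a`
  have hcard : #W ≤ #(Icc (F b) (F a)) := by
    refine card_le_card_of_injOn F (fun w hw => ?_) (hmono.injOn.mono hmem)
    exact mem_Icc.mpr ⟨hmono.monotoneOn (hmem _ (W.min'_mem hne)) (hmem w hw) (W.min'_le w hw),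
      hmono.monotoneOn (hmem w hw) (hmem _ (W.max'_mem hne)) (W.le_max' w hw)⟩
  rw [Int.card_Icc] at hcard
  have hFab : ((#W - 1 : ℕ) : ℤ) ≤ F a - F b := by have := hne.card_pos; omega
  have hba : b ≤ a := W.min'_le _ (W.max'_mem hne)
  have hprod : 0 ≤ ∏ j ∈ Icc 1 n, (4 * c j) :=
    prod_nonneg fun j hj => mul_nonneg zero_le_four (hc j hj)
  have hb0 := (hW b (W.min'_mem hne)).1
  have haM := (hW a (W.max'_mem hne)).2.1
  calc ((#W - 1 : ℕ) : ℤ) ^ 2 * ∏ j ∈ Icc 1 n, (4 * c j)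
      ≤ (F a - F b) ^ 2 * ∏ j ∈ Icc 1 n, (4 * c j) := by gcongr
    _ ≤ (a - b) ^ 2 := nestedSqrt_sub_sq_mul_prod_le hc hb0 hba (hmem _ (W.min'_mem hne)).2
        (hmem _ (W.max'_mem hne)).2
    _ ≤ M ^ 2 := pow_le_pow_left₀ (by linarith) (by linarith) 2

end nestedSqrt

theorem add_le_of_sq_eq_sq_add {a b n : ℤ} (ha : 0 ≤ a) (hn : 0 < n)
    (h : a ^ 2 = b ^ 2 + n) : a + b ≤ n := by
  have hab : b < a := lt_of_pow_lt_pow_left₀ 2 ha (by linarith)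
  nlinarith

theorem two_pow_mul_two_pow_succ (m l : ℕ) : (2 : ℤ) ^ (m * 2 ^ (l + 1)) = (4 ^ m) ^ 2 ^ l := by
  rw [show (4 : ℤ) = 2 ^ 2 by norm_num, ← pow_mul, ← pow_mul, pow_succ]
  ring_nf

section growth

variable {a : ℕ → ℤ} {A : ℤ} {N : ℕ}

theorem mul_prod_le_of_mul_prod_le_sq {l : ℕ} (h0 : 0 < a (l + 1))
    (h : A * ∏ j ∈ Icc 1 (l + 1), a j ≤ a (l + 1) ^ 2) :
    A * ∏ j ∈ Icc 1 l, a j ≤ a (l + 1) := by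
  rw [prod_Icc_succ_top (by omega), ← mul_assoc, sq] at h
  exact le_of_mul_le_mul_right h h0

theorem pow_two_pow_le_mul_prod (hA : 0 ≤ A)
    (ha : ∀ l ∈ Icc 1 N, 0 < a l ∧ A * ∏ j ∈ Icc 1 l, a j ≤ a l ^ 2) {l : ℕ}
    (hl : l ≤ N) :
    A ^ 2 ^ l ≤ A * ∏ j ∈ Icc 1 l, a j := by
  induction l with
  | zero => simp
  | succ l ih =>
    obtain ⟨h0, h⟩ := ha (l + 1) (mem_Icc.mpr ⟨l.succ_pos, hl⟩)
    have hQ := ih (by omega)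
    have hQa := mul_prod_le_of_mul_prod_le_sq h0 h
    calc A ^ 2 ^ (l + 1) = A ^ 2 ^ l * A ^ 2 ^ l := by rw [pow_succ, pow_mul, sq]
      _ ≤ (A * ∏ j ∈ Icc 1 l, a j) * a (l + 1) :=
        mul_le_mul hQ (hQ.trans hQa) (pow_nonneg hA _) ((pow_nonneg hA _).trans hQ)
      _ = A * ∏ j ∈ Icc 1 (l + 1), a j := by rw [prod_Icc_succ_top (by omega), mul_assoc]

theorem pow_two_pow_le_of_mul_prod_le_sq (hA : 0 ≤ A)
    (ha : ∀ l ∈ Icc 1 N, 0 < a l ∧ A * ∏ j ∈ Icc 1 l, a j ≤ a l ^ 2) {l : ℕ}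
    (hl : l + 1 ≤ N) :
    A ^ 2 ^ l ≤ a (l + 1) :=
  have h := ha (l + 1) (mem_Icc.mpr ⟨l.succ_pos, hl⟩)
  (pow_two_pow_le_mul_prod hA ha (by omega)).trans (mul_prod_le_of_mul_prod_le_sq h.1 h.2)

end growth

section coeff

variable {c : ℕ → ℤ} {k : ℕ}

theorem four_pow_mul_prod_le_sq {l d : ℕ} (hk : (chain c (l + (d + 2))).Splits)
    (hck : 0 < c (l + (d + 2))) (hc : ∀ j ∈ Icc 1 l, 0 ≤ c j) {M : ℤ}
    (hM : ∀ w ∈ sqrtLevel c l (d + 1), w ≤ M) :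
    4 ^ (l + d) * ∏ j ∈ Icc 1 l, c j ≤ M ^ 2 := by
  have hcard := two_pow_add_one_le_card_sqrtLevel hk hck
  have hW := card_sub_one_sq_mul_prod_le hc fun w hw =>
    have h := nonneg_and_splits_of_mem_sqrtLevel hk hw
    ⟨h.1, hM w hw, h.2.1⟩
  rw [prod_mul_distrib, prod_const, Nat.card_Icc, Nat.add_sub_cancel] at hW
  calc 4 ^ (l + d) * ∏ j ∈ Icc 1 l, c j
        = (((2 ^ d : ℕ) : ℤ)) ^ 2 * (4 ^ l * ∏ j ∈ Icc 1 l, c j) := by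
        rw [pow_add, show (4 : ℤ) ^ d = (2 ^ d) ^ 2 by
          rw [← pow_mul, mul_comm, pow_mul]; norm_num]
        push_cast
        ring
    _ ≤ ((#(sqrtLevel c l (d + 1)) - 1 : ℕ) : ℤ) ^ 2 * (4 ^ l * ∏ j ∈ Icc 1 l, c j) := by
        have : 0 ≤ ∏ j ∈ Icc 1 l, c j := prod_nonneg hc
        gcongr
        omega
    _ ≤ M ^ 2 := hW

theorem one_le_coeff {k l : ℕ} (hk : (chain c k).Splits) (hck : 0 < c k) (hl : 1 ≤ l)
    (hlk : l + 2 ≤ k) : 1 ≤ c l := by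
  obtain ⟨d, rfl⟩ : ∃ d, k = l + (d + 2) := ⟨k - l - 2, by omega⟩
  obtain ⟨n, rfl⟩ : ∃ n, l = n + 1 := ⟨l - 1, by omega⟩
  have hsub : sqrtLevel c (n + 1) (d + 1) ⊆ Icc 0 (c (n + 1)) := fun w hw =>
    have h := nonneg_and_splits_of_mem_sqrtLevel hk hw
    mem_Icc.mpr ⟨h.1, chain.le_coeff_of_splits_neg h.2.2⟩
  have := (two_pow_add_one_le_card_sqrtLevel hk hck).trans (card_le_card hsub)
  rw [Int.card_Icc] at this
  have := Nat.one_le_two_pow (n := d)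
  omega

theorem four_pow_mul_prod_le_sq_coeff {k l : ℕ} (hk : (chain c k).Splits) (hck : 0 < c k)
    (hl : 1 ≤ l) (hlk : l + 2 ≤ k) : 4 ^ (k - 2) * ∏ j ∈ Icc 1 l, c j ≤ c l ^ 2 := by
  obtain ⟨d, rfl⟩ : ∃ d, k = l + (d + 2) := ⟨k - l - 2, by omega⟩
  obtain ⟨n, rfl⟩ : ∃ n, l = n + 1 := ⟨l - 1, by omega⟩
  rw [show n + 1 + (d + 2) - 2 = n + 1 + d by omega]
  refine four_pow_mul_prod_le_sq hk hck (fun j hj => ?_) fun w hw => ?_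
  · obtain ⟨hj1, hjl⟩ := mem_Icc.mp hj
    exact zero_le_one.trans (one_le_coeff hk hck hj1 (by omega))
  · exact chain.le_coeff_of_splits_neg (nonneg_and_splits_of_mem_sqrtLevel hk hw).2.2

theorem four_pow_mul_prod_le_four_mul {k : ℕ} (hk : (chain c k).Splits) (hck : 0 < c k)
    (hk2 : 2 ≤ k) : 4 ^ (k - 2) * ∏ j ∈ Icc 1 (k - 2), c j ≤ 4 * c k := by
  obtain ⟨n, rfl⟩ : ∃ n, k = n + 2 := ⟨k - 2, by omega⟩
  set m := Int.sqrt (c (n + 2))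
  have hm : m ^ 2 = c (n + 2) := chain.sqrt_coeff_sq_of_splits hk
  have hm0 : 0 < m := by nlinarith [Int.sqrt_nonneg (c (n + 2))]
  have hsq : ∀ u ∈ level c (n + 1) 1, Int.sqrt (c (n + 1) + u) ^ 2 = c (n + 1) + u :=
    fun u hu => chain.sqrt_sq_of_splits (splits_of_mem_level (d := 1) hk hu)
  have hpm := hsq m (by simp [level_one, m])
  have hmm := hsq (-m) (by simp [level_one, m])
  -- the squares of `√(c (n + 1) ± m)` differ by `2 m`, so both are at most `2 m`
  have hab := add_le_of_sq_eq_sq_add (Int.sqrt_nonneg _) (by positivity : 0 < 2 * m)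
    (hpm.trans (by linarith [hmm]))
  have hprod := four_pow_mul_prod_le_sq (d := 0) (M := 2 * m) hk hck (fun j hj => ?_) ?_
  · rw [add_zero] at hprod
    rw [Nat.add_sub_cancel, ← hm]
    linarith
  · obtain ⟨hj1, hjl⟩ := mem_Icc.mp hj
    exact zero_le_one.trans (one_le_coeff hk hck hj1 (by omega))
  · intro w hw
    rw [sqrtLevel, level_one] at hw
    simp only [image_insert, image_singleton, mem_insert, mem_singleton] at hw
    have := Int.sqrt_nonneg (c (n + 1) + m)
    have := Int.sqrt_nonneg (c (n + 1) + -m)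
    rcases hw with rfl | rfl <;> linarith

theorem coeff_le_sq_coeff_pred {k : ℕ} (hk : (chain c k).Splits) (hk2 : 2 ≤ k) :
    c k ≤ c (k - 1) ^ 2 := by
  obtain ⟨n, rfl⟩ : ∃ n, k = n + 2 := ⟨k - 2, by omega⟩
  set m := Int.sqrt (c (n + 2))
  have hm : m ^ 2 = c (n + 2) := chain.sqrt_coeff_sq_of_splits hk
  have hmc : m ≤ c (n + 1) :=
    chain.le_coeff_of_splits_neg <|
      splits_of_mem_level (n := n + 1) (d := 1) hk (by simp [level_one, m])
  rw [← hm]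
  exact pow_le_pow_left₀ (Int.sqrt_nonneg _) hmc 2

theorem pos_and_four_pow_mul_prod_le_sq (hk : (chain c k).Splits) (hck : 0 < c k) :
    ∀ l ∈ Icc 1 (k - 2), 0 < c l ∧ 4 ^ (k - 2) * ∏ j ∈ Icc 1 l, c j ≤ c l ^ 2 := by
  intro l hl
  obtain ⟨hl1, hlk⟩ := mem_Icc.mp hl
  exact ⟨one_le_coeff hk hck hl1 (by omega),
    four_pow_mul_prod_le_sq_coeff hk hck hl1 (by omega)⟩

theorem two_pow_le_coeff (hk : (chain c k).Splits) (hck : 0 < c k) {l : ℕ} (hl : l + 3 ≤ k) :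
    2 ^ ((k - 2) * 2 ^ (l + 1)) ≤ c (l + 1) := by
  rw [two_pow_mul_two_pow_succ]
  exact pow_two_pow_le_of_mul_prod_le_sq (by positivity)
    (pos_and_four_pow_mul_prod_le_sq hk hck) (by omega)

theorem two_pow_le_four_mul_coeff (hk : (chain c k).Splits) (hck : 0 < c k) (hk2 : 2 ≤ k) :
    2 ^ ((k - 2) * 2 ^ (k - 1)) ≤ 4 * c k := by
  rw [show k - 1 = k - 2 + 1 by omega, two_pow_mul_two_pow_succ]
  exact (pow_two_pow_le_mul_prod (by positivity)
    (pos_and_four_pow_mul_prod_le_sq hk hck) le_rfl).trans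
    (four_pow_mul_prod_le_four_mul hk hck hk2)

theorem two_pow_lt_coeff_pow_sixteen_of_add_two_le (hk : (chain c k).Splits) (hck : 0 < c k)
    {j : ℕ} (hj : 1 ≤ j) (hjk : j + 2 ≤ k) : 2 ^ (k * 2 ^ j) < c j ^ 16 := by
  obtain ⟨l, rfl⟩ : ∃ l, j = l + 1 := ⟨j - 1, by omega⟩
  have hexp : k * 2 ^ (l + 1) < (k - 2) * 2 ^ (l + 1) * 16 := by
    have := Nat.mul_lt_mul_of_pos_right (show k < (k - 2) * 16 by omega) (Nat.two_pow_pos (l + 1))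
    linarith
  calc (2 : ℤ) ^ (k * 2 ^ (l + 1)) < 2 ^ ((k - 2) * 2 ^ (l + 1) * 16) :=
        pow_lt_pow_right₀ one_lt_two hexp
    _ = (2 ^ ((k - 2) * 2 ^ (l + 1))) ^ 16 := pow_mul _ _ _
    _ ≤ c (l + 1) ^ 16 := by gcongr; exact two_pow_le_coeff hk hck (by omega)

theorem two_pow_lt_coeff_pow_sixteen_top (hk : (chain c k).Splits) (hck : 0 < c k) (hk3 : 3 ≤ k) :
    2 ^ (k * 2 ^ k) < c k ^ 16 := by
  have h := two_pow_le_four_mul_coeff hk hck (by omega)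
  have hexp : k * 2 ^ k + 32 < (k - 2) * 2 ^ (k - 1) * 16 := by
    obtain ⟨K, rfl⟩ : ∃ K, k = K + 3 := ⟨k - 3, by omega⟩
    rw [show K + 3 - 2 = K + 1 by omega, show K + 3 - 1 = K + 2 by omega, pow_succ _ (K + 2)]
    nlinarith [Nat.pow_le_pow_right two_pos (show 2 ≤ K + 2 by omega)]
  have : (2 : ℤ) ^ (k * 2 ^ k) * 4 ^ 16 < c k ^ 16 * 4 ^ 16 := by
    calc (2 : ℤ) ^ (k * 2 ^ k) * 4 ^ 16 = 2 ^ (k * 2 ^ k + 32) := by rw [pow_add]; norm_num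
      _ < 2 ^ ((k - 2) * 2 ^ (k - 1) * 16) := pow_lt_pow_right₀ one_lt_two hexp
      _ = (2 ^ ((k - 2) * 2 ^ (k - 1))) ^ 16 := pow_mul _ _ _
      _ ≤ (4 * c k) ^ 16 := by gcongr
      _ = c k ^ 16 * 4 ^ 16 := by ring
  exact lt_of_mul_lt_mul_right this (by positivity)

theorem two_pow_lt_coeff_pow_sixteen (hk : (chain c k).Splits) (hck : 0 < c k) (hk3 : 3 ≤ k)
    {j : ℕ} (hj : 1 ≤ j) (hjk : j ≤ k) : 2 ^ (k * 2 ^ j) < c j ^ 16 := by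
  obtain hjk | rfl | rfl : j + 2 ≤ k ∨ j = k - 1 ∨ j = k := by omega
  · exact two_pow_lt_coeff_pow_sixteen_of_add_two_le hk hck hj hjk
  · refine lt_of_pow_lt_pow_left₀ 2 (by positivity) ?_
    calc ((2 : ℤ) ^ (k * 2 ^ (k - 1))) ^ 2 = 2 ^ (k * 2 ^ k) := by
          rw [← pow_mul, mul_assoc, ← pow_succ, Nat.sub_add_cancel (by omega)]
      _ < c k ^ 16 := two_pow_lt_coeff_pow_sixteen_top hk hck hk3
      _ ≤ (c (k - 1) ^ 2) ^ 16 := by gcongr; exact coeff_le_sq_coeff_pred hk (by omega)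
      _ = (c (k - 1) ^ 16) ^ 2 := by ring
  · exact two_pow_lt_coeff_pow_sixteen_top hk hck hk3

end coeff

theorem stmt_15 :
    ∃ lam : ℝ, 0 < lam ∧
      ∀ (k : ℕ) (c : ℕ → ℤ), Crumbles (chain c k) → 3 ≤ k → 0 < c k →
        ∀ j, 1 ≤ j → j ≤ k → Real.log (c j) > lam * k * 2 ^ j := by
  refine ⟨Real.log 2 / 16, by positivity, fun k c hcr hk3 hck j hj hjk => ?_⟩
  have h := two_pow_lt_coeff_pow_sixteen (hcr.splits (chain.monic c k)) hck hk3 hj hjk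
  have hR : (2 : ℝ) ^ (k * 2 ^ j) < (c j : ℝ) ^ 16 := by exact_mod_cast h
  have hlog := Real.log_lt_log (by positivity) hR
  rw [Real.log_pow, Real.log_pow] at hlog
  push_cast at hlog
  linarith
end
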